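/- arXiv:1505.02418 — 3 statements merged into one kernel-verified Lean document; each statement's English description precedes it below -/
import Mathlib

section
/- Existence of minimizers for the capped problems: On a complete probability space carrying a càdlàg process L with law P₀, equipped with the right-continuous complete filtration F̄^L_+ generated by L, let 𝒰^{[n]} be the set of F̄^L_+-progressively measurable processes u : [0,T] × Ω → [0,n]^k, and for u ∈ 𝒰^{[n]} set J(u) = E[C(L, ∫_0^· u_s ds)]. Under hypothesis (3) (in particular the polynomial growth condition (3c), which makes J finite on 𝒰^{[n]}), the infimum inf_{u ∈ 𝒰^{[n]}} J(u) is attained at some u^{[n]} ∈ 𝒰^{[n]}. -/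
open MeasureTheory Set Filter MeasurableSpace
open scoped ENNReal symmDiff

noncomputable section

/-- `ℝ^N` with the Euclidean norm. -/
abbrev Rvec (N : ℕ) := EuclideanSpace ℝ (Fin N)

/-- A function is càdlàg on `[0,T]`: right-continuous on `[0,T)` with left limits on `(0,T]`. -/
def CadlagOn {E : Type*} [TopologicalSpace E] (T : ℝ) (x : ℝ → E) : Prop :=
  (∀ t ∈ Ico (0:ℝ) T, ContinuousWithinAt x (Ici t) t) ∧
  (∀ t ∈ Ioc (0:ℝ) T, ∃ l : E, Tendsto x (nhdsWithin t (Iio t)) (nhds l))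

/-- The nonnegative orthant `[0,∞)^k`. -/
def orthant (k : ℕ) : Set (Rvec k) := {a | ∀ i, 0 ≤ a i}

/-- The canonical monotone-follower path space `D^{d+k}_{·,↑}(L,A)`: the first `d`
coordinates (the target `L`) are càdlàg on `[0,T]`, the last `k` coordinates
(the follower `A`) are càdlàg, componentwise nondecreasing on `[0,T]` with `A_0 ≥ 0`. -/
def MFPath (d k : ℕ) (T : ℝ) : Type :=
  { ω : ℝ → Rvec d × Rvec k //
      CadlagOn T (fun t => (ω t).1) ∧ CadlagOn T (fun t => (ω t).2) ∧
      (∀ i, MonotoneOn (fun t => (ω t).2 i) (Icc 0 T)) ∧ (∀ i, 0 ≤ (ω 0).2 i) }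

/-- The σ-algebra generated by the coordinate maps. -/
instance (d k : ℕ) (T : ℝ) : MeasurableSpace (MFPath d k T) :=
  inferInstanceAs (MeasurableSpace
    { ω : ℝ → Rvec d × Rvec k //
      CadlagOn T (fun t => (ω t).1) ∧ CadlagOn T (fun t => (ω t).2) ∧
      (∀ i, MonotoneOn (fun t => (ω t).2 i) (Icc 0 T)) ∧ (∀ i, 0 ≤ (ω 0).2 i) })

/-- The target coordinate process. -/
def MF.L {d k : ℕ} {T : ℝ} (ω : MFPath d k T) : ℝ → Rvec d := fun t => (ω.1 t).1

/-- The follower coordinate process. -/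
def MF.A {d k : ℕ} {T : ℝ} (ω : MFPath d k T) : ℝ → Rvec k := fun t => (ω.1 t).2

/-- `F^A_t = σ(A_s : 0 ≤ s ≤ t)`. -/
def sigmaA (d k : ℕ) (T t : ℝ) : MeasurableSpace (MFPath d k T) :=
  ⨆ s ∈ Icc (0:ℝ) t, MeasurableSpace.comap (fun ω => MF.A ω s) inferInstance

/-- `F^L_t = σ(L_s : 0 ≤ s ≤ min t T)`. -/
def sigmaL (d k : ℕ) (T t : ℝ) : MeasurableSpace (MFPath d k T) :=
  ⨆ s ∈ Icc (0:ℝ) (min t T), MeasurableSpace.comap (fun ω => MF.L ω s) inferInstance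

/-- `F^L_{t+} = ⋂_{s>t} F^L_s`. -/
def sigmaLplus (d k : ℕ) (T t : ℝ) : MeasurableSpace (MFPath d k T) :=
  ⨅ s ∈ Ioi t, sigmaL d k T s

/-- Conditional independence of `m₁` and `m₂` given `m'` under `μ`, expressed through
conditional expectations of indicators. -/
def CondIndepGiven {Ω : Type*} [MeasurableSpace Ω] (μ : Measure Ω)
    (m₁ m₂ m' : MeasurableSpace Ω) : Prop :=
  ∀ s, MeasurableSet[m₁] s → ∀ u, MeasurableSet[m₂] u →
    μ[(s ∩ u).indicator (fun _ => (1:ℝ)) | m'] =ᵐ[μ]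
      μ[s.indicator (fun _ => (1:ℝ)) | m'] * μ[u.indicator (fun _ => (1:ℝ)) | m']

/-- Admissible controls: the `L`-marginal is the prescribed law `P0` and, for every
`t ∈ [0,T]`, `F^A_t` and `F^L_T` are conditionally independent given `F^L_{t+}`. -/
structure IsAdmissible (d k : ℕ) (T : ℝ) (P0 : Measure (ℝ → Rvec d))
    (P : Measure (MFPath d k T)) : Prop where
  prob : IsProbabilityMeasure P
  marginal : P.map (fun ω => MF.L ω) = P0
  condIndep : ∀ t ∈ Icc (0:ℝ) T,
    CondIndepGiven P (sigmaA d k T t) (sigmaL d k T T) (sigmaLplus d k T t)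

/-- Strongly admissible: admissible and `F^A_t ⊆ F^L_{t+}` up to `P`-null sets. -/
def IsStronglyAdmissible (d k : ℕ) (T : ℝ) (P0 : Measure (ℝ → Rvec d))
    (P : Measure (MFPath d k T)) : Prop :=
  IsAdmissible d k T P0 P ∧
    ∀ t ∈ Icc (0:ℝ) T, ∀ s : Set (MFPath d k T), MeasurableSet[sigmaA d k T t] s →
      ∃ s' : Set (MFPath d k T), MeasurableSet[sigmaLplus d k T t] s' ∧ P (s ∆ s') = 0

/-- Extension of a path on `[0,T]` to all of `ℝ` by capping time. -/
def extOn (T : ℝ) (a : ℝ → ℝ) : ℝ → ℝ := fun t => a (max 0 (min t T))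

open Classical in
/-- The Lebesgue–Stieltjes measure of a nondecreasing right-continuous function
(junk value `0` otherwise). -/
def lsMeasure (a : ℝ → ℝ) : Measure ℝ :=
  if hyp : Monotone a ∧ ∀ x, ContinuousWithinAt a (Ici x) x
  then StieltjesFunction.measure ⟨a, hyp.1, hyp.2⟩
  else 0

/-- `∫_{[0,T]} ψ(t)·dA_t = ψ(0)·A_0 + ∫_{(0,T]} ψ(t)·dA_t`, with the convention
`A_{0-} = 0` (so the initial jump `A_0` is charged at time `0`). -/
def stInt (T : ℝ) {k : ℕ} (ψ : ℝ → Rvec k) (a : ℝ → Rvec k) : ℝ≥0∞ :=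
  ∑ i, (ENNReal.ofReal (ψ 0 i * a 0 i) +
    ∫⁻ t in Ioc (0:ℝ) T, ENNReal.ofReal (ψ t i) ∂ lsMeasure (extOn T (fun s => a s i)))

/-- The cost functional `C(L,A) = ∫_{[0,T]} f·dA + ∫_0^T h(L_t,A_t) dt + g(L_T,A_T)`. -/
def costC (d k : ℕ) (T : ℝ) (f : ℝ → Rvec k) (h g : Rvec d → Rvec k → ℝ)
    (ω : MFPath d k T) : ℝ≥0∞ :=
  stInt T f (MF.A ω) +
    (∫⁻ t in Ioc (0:ℝ) T, ENNReal.ofReal (h (MF.L ω t) (MF.A ω t))) +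
    ENNReal.ofReal (g (MF.L ω T) (MF.A ω T))

/-- The expected cost `J(P) = E^P[C(L,A)] ∈ [0,∞]`. -/
def mfCost (d k : ℕ) (T : ℝ) (f : ℝ → Rvec k) (h g : Rvec d → Rvec k → ℝ)
    (P : Measure (MFPath d k T)) : ℝ≥0∞ :=
  ∫⁻ ω, costC d k T f h g ω ∂P

/-- The value `V = inf_{P ∈ 𝒜} J(P)` of the monotone-follower problem. -/
def mfValue (d k : ℕ) (T : ℝ) (P0 : Measure (ℝ → Rvec d))
    (f : ℝ → Rvec k) (h g : Rvec d → Rvec k → ℝ) : ℝ≥0∞ :=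
  ⨅ (P : Measure (MFPath d k T)) (_ : IsAdmissible d k T P0 P), mfCost d k T f h g P

open scoped RealInnerProductSpace

/-- `F^L_t = σ(L_s : 0 ≤ s ≤ min t T)` for a process `L` on an abstract space. -/
def sigmaProc {Ω : Type*} {d : ℕ} (T : ℝ) (L : Ω → ℝ → Rvec d) (t : ℝ) :
    MeasurableSpace Ω :=
  ⨆ s ∈ Icc (0:ℝ) (min t T), MeasurableSpace.comap (fun ω => L ω s) inferInstance

/-- The σ-algebra generated by the `μ`-null sets. -/
def nullSigma {Ω : Type*} [MeasurableSpace Ω] (μ : Measure Ω) : MeasurableSpace Ω :=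
  MeasurableSpace.generateFrom {N : Set Ω | μ N = 0}

/-- `F̄^L_{t+}`: the right-continuous complete augmentation of the filtration
generated by `L`. -/
def sigmaBarPlus {Ω : Type*} [MeasurableSpace Ω] (μ : Measure Ω) {d : ℕ} (T : ℝ)
    (L : Ω → ℝ → Rvec d) (t : ℝ) : MeasurableSpace Ω :=
  ⨅ s ∈ Ioi t, (sigmaProc T L s ⊔ nullSigma μ)

/-- Progressive measurability of `u` with respect to the filtration `F`: for every
`t ∈ [0,T]`, the map `[0,t] × Ω ∋ (s,ω) ↦ u s ω` is `B([0,t]) ⊗ F t`-measurable. -/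
def ProgMeas {Ω : Type*} {k : ℕ} (T : ℝ) (F : ℝ → MeasurableSpace Ω)
    (u : ℝ → Ω → Rvec k) : Prop :=
  ∀ t ∈ Icc (0:ℝ) T, @Measurable (Icc (0:ℝ) t × Ω) (Rvec k)
    (@Prod.instMeasurableSpace _ _ _ (F t)) _ (fun p => u (p.1 : ℝ) p.2)

/-- The class `𝒰^{[n]}` of progressively measurable controls with values in `[0,n]^k`. -/
def Ucap {Ω : Type*} [MeasurableSpace Ω] (μ : Measure Ω) {d : ℕ} (k : ℕ) (T : ℝ)
    (L : Ω → ℝ → Rvec d) (n : ℕ) : Set (ℝ → Ω → Rvec k) :=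
  {u | ProgMeas T (sigmaBarPlus μ T L) u ∧ ∀ t ω i, u t ω i ∈ Icc (0:ℝ) n}

/-- `A_t = ∫_0^t u_s ds`. -/
def Acap {Ω : Type*} {k : ℕ} (u : ℝ → Ω → Rvec k) (t : ℝ) (ω : Ω) : Rvec k :=
  ∫ s in Ioc (0:ℝ) t, u s ω

/-- The cost `J(u) = E[∫_0^T f(t)·u_t dt + ∫_0^T h(L_t,A_t) dt + g(L_T,A_T)]`
of a capped control (note `∫_{[0,T]} f·dA = ∫_0^T f(t)·u_t dt` here). -/
def capCost {Ω : Type*} [MeasurableSpace Ω] (μ : Measure Ω) {d k : ℕ} (T : ℝ)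
    (L : Ω → ℝ → Rvec d) (f : ℝ → Rvec k) (h g : Rvec d → Rvec k → ℝ)
    (u : ℝ → Ω → Rvec k) : ℝ≥0∞ :=
  ∫⁻ ω, (ENNReal.ofReal (∫ t in Ioc (0:ℝ) T, ⟪f t, u t ω⟫) +
    (∫⁻ t in Ioc (0:ℝ) T, ENNReal.ofReal (h (L ω t) (Acap u t ω))) +
    ENNReal.ofReal (g (L ω T) (Acap u T ω))) ∂μ

open scoped Topology

/-!
Write `ν = P ⊗ dt|_(0,T]` and identify a control `u` with `(ω,t) ↦ u_t(ω)`. The cost `J`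
only depends on the `ν`-class of `u`; it is convex on the convex set `𝒰^{[n]}` (convexity
of `h`, `g` and linearity of `u ↦ ∫_0^· u`), and lower semicontinuous along `ν`-a.e.
convergent sequences (dominated convergence for `A` and for `∫ f·u`, Fatou for `∫ h`).
Moreover `𝒰^{[n]}` is bounded in `L²(ν)` and stable under a.e. limits (a coordinatewise
`limsup`, clipped to `[0,n]`, is again progressively measurable). So the sublevel sets
`{J ≤ c}` are nonempty, closed, convex and bounded in the Hilbert space `L²(ν)` for
`c > inf J`. A decreasing sequence of such sets has a common point, since their
minimal-norm points form a Cauchy sequence by the parallelogram law; a common point of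
all `{J ≤ c_m}` with `c_m ↓ inf J` is a minimizer.
-/

section Hilbert

variable {E : Type*} [NormedAddCommGroup E] [InnerProductSpace ℝ E]

theorem norm_sub_sq_le_of_isMinOn_norm {K : Set E} (hK : Convex ℝ K) {x y : E} (hx : x ∈ K)
    (hmin : IsMinOn (‖·‖) K x) (hy : y ∈ K) : ‖y - x‖ ^ 2 ≤ 2 * (‖y‖ ^ 2 - ‖x‖ ^ 2) := by
  have hmid : ‖x‖ ≤ ‖(1 / 2 : ℝ) • (x + y)‖ := by
    simpa [smul_add] using hmin (hK hx hy (by norm_num : (0:ℝ) ≤ 1 / 2)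
      (by norm_num : (0:ℝ) ≤ 1 / 2) (by norm_num))
  rw [norm_smul, Real.norm_of_nonneg (by norm_num)] at hmid
  have hpar := parallelogram_law_with_norm ℝ x y
  rw [norm_sub_rev x y] at hpar
  nlinarith [mul_self_le_mul_self (norm_nonneg x) hmid]

theorem exists_isMinOn_norm_of_isClosed_convex [CompleteSpace E] {K : Set E}
    (hne : K.Nonempty) (hcl : IsClosed K) (hK : Convex ℝ K) : ∃ x ∈ K, IsMinOn (‖·‖) K x := by
  obtain ⟨x, hx, hxmin⟩ := exists_norm_eq_iInf_of_complete_convex hne hcl.isComplete hK 0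
  have : Nonempty K := hne.to_subtype
  refine ⟨x, hx, fun y hy => ?_⟩
  simp only [zero_sub, norm_neg] at hxmin
  change ‖x‖ ≤ ‖y‖
  exact hxmin ▸ ciInf_le ⟨0, by rintro _ ⟨w, rfl⟩; positivity⟩ (⟨y, hy⟩ : K)

theorem Antitone.nonempty_iInter_of_isClosed_convex [CompleteSpace E] {K : ℕ → Set E}
    (hanti : Antitone K) (hne : ∀ m, (K m).Nonempty) (hcl : ∀ m, IsClosed (K m))
    (hconv : ∀ m, Convex ℝ (K m)) (hbdd : Bornology.IsBounded (K 0)) :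
    (⋂ m, K m).Nonempty := by
  choose x hxK hxmin using fun m => exists_isMinOn_norm_of_isClosed_convex (hne m) (hcl m)
    (hconv m)
  obtain ⟨R, hR⟩ := hbdd.exists_norm_le
  have hmono : Monotone fun m => ‖x m‖ ^ 2 := fun m m' hm =>
    pow_le_pow_left₀ (norm_nonneg _) (hxmin m (hanti hm (hxK m'))) 2
  have hbddAbove : BddAbove (range fun m => ‖x m‖ ^ 2) := ⟨R ^ 2, by
    rintro _ ⟨m, rfl⟩
    exact pow_le_pow_left₀ (norm_nonneg _) (hR _ (hanti (Nat.zero_le m) (hxK m))) 2⟩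
  have hcauchy : CauchySeq x := by
    refine Metric.cauchySeq_iff'.2 fun ε hε => ?_
    obtain ⟨N, hN⟩ := eventually_atTop.1 <| (tendsto_order.1 (tendsto_atTop_ciSup hmono
      hbddAbove)).1 _ (sub_lt_self _ (by positivity : 0 < ε ^ 2 / 2))
    refine ⟨N, fun m hm => ?_⟩
    have hsq := norm_sub_sq_le_of_isMinOn_norm (hconv N) (hxK N) (hxmin N) (hanti hm (hxK m))
    have hle := le_ciSup hbddAbove m
    rw [dist_eq_norm]
    nlinarith [hN N le_rfl, norm_nonneg (x m - x N)]
  obtain ⟨y, hy⟩ := cauchySeq_tendsto_of_complete hcauchy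
  exact ⟨y, mem_iInter.2 fun m => (hcl m).mem_of_tendsto hy <|
    eventually_atTop.2 ⟨m, fun j hj => hanti hj (hxK j)⟩⟩

theorem QuasiconvexOn.exists_isMinOn_of_isClosed [CompleteSpace E] {β : Type*}
    [CompleteLinearOrder β] [DenselyOrdered β] [TopologicalSpace β] [OrderTopology β]
    [FirstCountableTopology β] {S : Set E} {J : E → β} (hJ : QuasiconvexOn ℝ S J)
    (hne : S.Nonempty) (hbdd : Bornology.IsBounded S) (hcl : ∀ c, IsClosed {x ∈ S | J x ≤ c}) :
    ∃ x ∈ S, IsMinOn J S x := by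
  set I := ⨅ x ∈ S, J x
  by_cases hattained : ∃ x ∈ S, J x ≤ I
  · obtain ⟨x, hx, hxI⟩ := hattained
    exact ⟨x, hx, fun y hy => hxI.trans (biInf_le J hy)⟩
  push Not at hattained
  obtain ⟨x₀, hx₀⟩ := hne
  obtain ⟨c, hcanti, hcmem, hclim⟩ := exists_seq_strictAnti_tendsto' (hattained x₀ hx₀)
  have hKne : ∀ m, {x ∈ S | J x ≤ c m}.Nonempty := fun m => by
    obtain ⟨x, hx⟩ := iInf_lt_iff.1 (hcmem m).1
    obtain ⟨hxS, hxc⟩ := iInf_lt_iff.1 hx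
    exact ⟨x, hxS, hxc.le⟩
  obtain ⟨x, hx⟩ := Antitone.nonempty_iInter_of_isClosed_convex
    (K := fun m => {x ∈ S | J x ≤ c m})
    (fun m m' hm y hy => ⟨hy.1, hy.2.trans (hcanti.antitone hm)⟩) hKne (fun _ => hcl _)
    (fun _ => hJ _) (hbdd.subset fun y hy => hy.1)
  have hxI : J x ≤ I := ge_of_tendsto' hclim fun m => (mem_iInter.1 hx m).2
  exact absurd hxI (hattained x (mem_iInter.1 hx 0).1).not_ge

end Hilbert

section DirectMethod

variable {E α β : Type*} [NormedAddCommGroup E] [MeasurableSpace α] {ν : Measure α}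
  [CompleteLinearOrder β] {C : Set (α → E)} {Φ : (α → E) → β}

def l2Classes (ν : Measure α) (C : Set (α → E)) : Set (Lp E 2 ν) :=
  {x | ∃ u ∈ C, x =ᵐ[ν] u}

theorem exists_mem_l2Classes [IsFiniteMeasure ν] {R : ℝ}
    (hmeas : ∀ u ∈ C, AEStronglyMeasurable u ν) (hbdd : ∀ u ∈ C, ∀ a, ‖u a‖ ≤ R)
    {u : α → E} (hu : u ∈ C) : ∃ x ∈ l2Classes ν C, x =ᵐ[ν] u :=
  have hLp : MemLp u 2 ν := .of_bound (hmeas u hu) R (ae_of_all _ (hbdd u hu))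
  ⟨hLp.toLp u, ⟨u, hu, hLp.coeFn_toLp⟩, hLp.coeFn_toLp⟩

theorem isBounded_l2Classes [IsFiniteMeasure ν] {R : ℝ} (hR : 0 ≤ R)
    (hbdd : ∀ u ∈ C, ∀ a, ‖u a‖ ≤ R) : Bornology.IsBounded (l2Classes ν C) := by
  refine isBounded_iff_forall_norm_le.2 ⟨_, fun x ⟨u, hu, hxu⟩ => Lp.norm_le_of_ae_bound hR ?_⟩
  filter_upwards [hxu] with a ha
  exact ha ▸ hbdd u hu a

theorem QuasiconvexOn.l2Classes [NormedSpace ℝ E] (hconv : QuasiconvexOn ℝ C Φ)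
    (hΦ : ∀ u v, u =ᵐ[ν] v → Φ u = Φ v) :
    QuasiconvexOn ℝ (l2Classes ν C) fun x => Φ x := by
  rintro c x ⟨⟨u, hu, hxu⟩, hxc⟩ y ⟨⟨v, hv, hyv⟩, hyc⟩ a b ha hb hab
  have hcomb : ⇑(a • x + b • y) =ᵐ[ν] a • u + b • v := by
    filter_upwards [Lp.coeFn_add (a • x) (b • y), Lp.coeFn_smul a x, Lp.coeFn_smul b y,
      hxu, hyv] with p h1 h2 h3 h4 h5
    simp only [h1, Pi.add_apply, h2, h3, Pi.smul_apply, h4, h5]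
  have hmem := hconv c ⟨hu, hΦ _ _ hxu ▸ hxc⟩ ⟨hv, hΦ _ _ hyv ▸ hyc⟩ ha hb hab
  exact ⟨⟨_, hmem.1, hcomb⟩, (hΦ _ _ hcomb).trans_le hmem.2⟩

theorem isClosed_l2Classes_sublevel [IsFiniteMeasure ν]
    (hclosed : ∀ us : ℕ → α → E, (∀ j, us j ∈ C) → ∀ v : α → E,
      (∀ᵐ a ∂ν, Tendsto (fun j => us j a) atTop (𝓝 (v a))) → ∃ w ∈ C, w =ᵐ[ν] v)
    (hΦ : ∀ u v, u =ᵐ[ν] v → Φ u = Φ v)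
    (hlsc : ∀ us : ℕ → α → E, (∀ j, us j ∈ C) → ∀ v ∈ C,
      (∀ᵐ a ∂ν, Tendsto (fun j => us j a) atTop (𝓝 (v a))) →
        Φ v ≤ liminf (fun j => Φ (us j)) atTop) (c : β) :
    IsClosed {x ∈ l2Classes ν C | Φ x ≤ c} := by
  refine IsSeqClosed.isClosed fun y x hy hyx => ?_
  choose u hu hyu using fun j => (hy j).1
  obtain ⟨ns, -, hns⟩ := (tendstoInMeasure_of_tendsto_Lp hyx).exists_seq_tendsto_ae
  have hlim : ∀ᵐ a ∂ν, Tendsto (fun i => u (ns i) a) atTop (𝓝 (x a)) := by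
    filter_upwards [hns, ae_all_iff.2 fun i => hyu (ns i)] with a ha hau
    exact ha.congr hau
  obtain ⟨w, hw, hwx⟩ := hclosed _ (fun i => hu (ns i)) x hlim
  have hwlim : ∀ᵐ a ∂ν, Tendsto (fun i => u (ns i) a) atTop (𝓝 (w a)) := by
    filter_upwards [hlim, hwx] with a ha hwa
    exact hwa ▸ ha
  refine ⟨⟨w, hw, hwx.symm⟩, ?_⟩
  calc Φ x = Φ w := hΦ _ _ hwx.symm
    _ ≤ liminf (fun i => Φ (u (ns i))) atTop := hlsc _ (fun i => hu (ns i)) w hw hwlim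
    _ ≤ c := liminf_le_of_frequently_le' <|
        .of_forall fun i => (hΦ _ _ (hyu (ns i))).symm.trans_le (hy (ns i)).2

theorem QuasiconvexOn.exists_isMinOn_of_le_liminf_ae [InnerProductSpace ℝ E] [CompleteSpace E]
    [DenselyOrdered β] [TopologicalSpace β] [OrderTopology β] [FirstCountableTopology β]
    [IsFiniteMeasure ν] (hconv : QuasiconvexOn ℝ C Φ) (hne : C.Nonempty)
    (hmeas : ∀ u ∈ C, AEStronglyMeasurable u ν) {R : ℝ} (hR : 0 ≤ R)
    (hbdd : ∀ u ∈ C, ∀ a, ‖u a‖ ≤ R)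
    (hclosed : ∀ us : ℕ → α → E, (∀ j, us j ∈ C) → ∀ v : α → E,
      (∀ᵐ a ∂ν, Tendsto (fun j => us j a) atTop (𝓝 (v a))) → ∃ w ∈ C, w =ᵐ[ν] v)
    (hΦ : ∀ u v, u =ᵐ[ν] v → Φ u = Φ v)
    (hlsc : ∀ us : ℕ → α → E, (∀ j, us j ∈ C) → ∀ v ∈ C,
      (∀ᵐ a ∂ν, Tendsto (fun j => us j a) atTop (𝓝 (v a))) →
        Φ v ≤ liminf (fun j => Φ (us j)) atTop) :
    ∃ u ∈ C, IsMinOn Φ C u := by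
  obtain ⟨u₀, hu₀⟩ := hne
  obtain ⟨x₀, hx₀, -⟩ := exists_mem_l2Classes hmeas hbdd hu₀
  obtain ⟨x, ⟨u, hu, hxu⟩, hxmin⟩ := (hconv.l2Classes hΦ).exists_isMinOn_of_isClosed
    ⟨x₀, hx₀⟩ (isBounded_l2Classes hR hbdd) (isClosed_l2Classes_sublevel hclosed hΦ hlsc)
  refine ⟨u, hu, fun v hv => ?_⟩
  obtain ⟨y, hy, hyv⟩ := exists_mem_l2Classes hmeas hbdd hv
  calc Φ u = Φ x := (hΦ _ _ hxu).symm
    _ ≤ Φ y := hxmin hy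
    _ = Φ v := hΦ _ _ hyv

end DirectMethod

theorem integral_mem_orthant {α : Type*} [MeasurableSpace α] {μ : Measure α} {k : ℕ}
    {v : α → Rvec k} (hv : ∀ᵐ a ∂μ, v a ∈ orthant k) : ∫ a, v a ∂μ ∈ orthant k := by
  by_cases hint : Integrable v μ
  · intro i
    change 0 ≤ EuclideanSpace.proj i (∫ a, v a ∂μ)
    rw [← (EuclideanSpace.proj i : Rvec k →L[ℝ] ℝ).integral_comp_comm hint]
    exact integral_nonneg_of_ae (hv.mono fun a ha => ha i)
  · rw [integral_undef hint]
    exact fun i => le_rfl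

theorem isClosed_orthant (k : ℕ) : IsClosed (orthant k) := by
  simp only [orthant, ofPred_forall]
  exact isClosed_iInter fun i => isClosed_le continuous_const (EuclideanSpace.proj i).continuous

theorem ConvexOn.ofReal_combo_le {E : Type*} [AddCommGroup E] [Module ℝ E] {s : Set E}
    {φ : E → ℝ} (hφ : ConvexOn ℝ s φ) (hφ0 : ∀ x ∈ s, 0 ≤ φ x) {x y : E} (hx : x ∈ s)
    (hy : y ∈ s) {a b : ℝ} (ha : 0 ≤ a) (hb : 0 ≤ b) (hab : a + b = 1) :
    ENNReal.ofReal (φ (a • x + b • y)) ≤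
      ENNReal.ofReal a * ENNReal.ofReal (φ x) + ENNReal.ofReal b * ENNReal.ofReal (φ y) := by
  rw [← ENNReal.ofReal_mul ha, ← ENNReal.ofReal_mul hb,
    ← ENNReal.ofReal_add (mul_nonneg ha (hφ0 x hx)) (mul_nonneg hb (hφ0 y hy))]
  exact ENNReal.ofReal_le_ofReal (hφ.2 hx hy ha hb hab)

theorem inner_nonneg_of_mem_orthant {k : ℕ} {x y : Rvec k} (hx : x ∈ orthant k)
    (hy : y ∈ orthant k) : 0 ≤ ⟪x, y⟫ := by
  simp only [PiLp.inner_apply, RCLike.inner_apply, conj_trivial]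
  exact Finset.sum_nonneg fun i _ => mul_nonneg (hy i) (hx i)

theorem ContinuousWithinAt.tendsto_ofReal_comp {X : Type*} [TopologicalSpace X] {s : Set X}
    {φ : X → ℝ} {a : X} (hφ : ContinuousWithinAt φ s a) {x : ℕ → X}
    (hx : Tendsto x atTop (𝓝 a)) (hxs : ∀ j, x j ∈ s) :
    Tendsto (fun j => ENNReal.ofReal (φ (x j))) atTop (𝓝 (ENNReal.ofReal (φ a))) :=
  (ENNReal.continuous_ofReal.tendsto _).comp
    (hφ.tendsto.comp (tendsto_nhdsWithin_iff.2 ⟨hx, .of_forall hxs⟩))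

theorem ENNReal.le_liminf_add {x y : ℕ → ℝ≥0∞} :
    liminf x atTop + liminf y atTop ≤ liminf (fun j => x j + y j) atTop := by
  simp only [liminf_eq_iSup_iInf_of_nat]
  rw [ENNReal.iSup_add_iSup_of_monotone (fun _ _ h => biInf_mono fun _ => h.trans)
    (fun _ _ h => biInf_mono fun _ => h.trans)]
  exact iSup_mono fun m => le_iInf₂ fun i hi => add_le_add (iInf₂_le i hi) (iInf₂_le i hi)

section PathCost

variable {d k : ℕ} {T : ℝ} {f : ℝ → Rvec k} {h g : Rvec d → Rvec k → ℝ} {ℓ : ℝ → Rvec d}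
  {v w : ℝ → Rvec k}

/-- `C(ℓ, ∫_0^· v)` for a target path `ℓ` and a control rate `v`; `capCost` is its mean. -/
def pathCost (T : ℝ) (f : ℝ → Rvec k) (h g : Rvec d → Rvec k → ℝ) (ℓ : ℝ → Rvec d)
    (v : ℝ → Rvec k) : ℝ≥0∞ :=
  ENNReal.ofReal (∫ t in Ioc 0 T, ⟪f t, v t⟫) +
    (∫⁻ t in Ioc 0 T, ENNReal.ofReal (h (ℓ t) (∫ s in Ioc 0 t, v s))) +
    ENNReal.ofReal (g (ℓ T) (∫ s in Ioc 0 T, v s))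

theorem capCost_eq_lintegral_pathCost {Ω : Type*} [MeasurableSpace Ω] (μ : Measure Ω)
    (L : Ω → ℝ → Rvec d) (u : ℝ → Ω → Rvec k) :
    capCost μ T L f h g u = ∫⁻ ω, pathCost T f h g (L ω) (fun t => u t ω) ∂μ :=
  rfl

theorem pathCost_congr_ae (hvw : v =ᵐ[volume.restrict (Ioc 0 T)] w) :
    pathCost T f h g ℓ v = pathCost T f h g ℓ w := by
  have hprim : ∀ t ≤ T, ∫ s in Ioc 0 t, v s = ∫ s in Ioc 0 t, w s := fun t ht =>
    integral_congr_ae (ae_restrict_of_ae_restrict_of_subset (Ioc_subset_Ioc_right ht) hvw)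
  unfold pathCost
  rw [integral_congr_ae (hvw.mono fun t ht => by rw [ht]), hprim T le_rfl,
    setLIntegral_congr_fun measurableSet_Ioc fun t ht => by rw [hprim t ht.2]]

theorem pathCost_congr_of_eqOn (hT : 0 ≤ T) {f' : ℝ → Rvec k} {ℓ' : ℝ → Rvec d}
    (hf : EqOn f f' (Icc 0 T)) (hℓ : EqOn ℓ ℓ' (Icc 0 T)) (hv : EqOn v w (Icc 0 T)) :
    pathCost T f h g ℓ v = pathCost T f' h g ℓ' w := by
  have hprim : ∀ t ∈ Icc 0 T, ∫ s in Ioc 0 t, v s = ∫ s in Ioc 0 t, w s := fun t ht =>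
    setIntegral_congr_fun measurableSet_Ioc fun s hs => hv ⟨hs.1.le, hs.2.trans ht.2⟩
  unfold pathCost
  rw [hℓ ⟨hT, le_rfl⟩, hprim T ⟨hT, le_rfl⟩,
    setIntegral_congr_fun measurableSet_Ioc fun t ht => by
      rw [hf (Ioc_subset_Icc_self ht), hv (Ioc_subset_Icc_self ht)],
    setLIntegral_congr_fun measurableSet_Ioc fun t ht => by
      rw [hℓ (Ioc_subset_Icc_self ht), hprim t (Ioc_subset_Icc_self ht)]]

theorem integrableOn_inner_of_continuousOn (hf : ContinuousOn f (Icc 0 T))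
    (hv : IntegrableOn v (Ioc 0 T)) : IntegrableOn (fun t => ⟪f t, v t⟫) (Ioc 0 T) := by
  obtain ⟨B, hB⟩ := isCompact_Icc.exists_bound_of_continuousOn hf
  refine (hv.norm.const_mul B).mono' (((hf.aestronglyMeasurable measurableSet_Icc).mono_set
    Ioc_subset_Icc_self).inner hv.aestronglyMeasurable) ?_
  filter_upwards [ae_restrict_mem measurableSet_Ioc] with t ht
  exact (norm_inner_le_norm _ _).trans
    (mul_le_mul_of_nonneg_right (hB t (Ioc_subset_Icc_self ht)) (norm_nonneg _))

theorem aemeasurable_primitive (hv : IntegrableOn v (Ioc 0 T)) :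
    AEMeasurable (fun t => ∫ s in Ioc 0 t, v s) (volume.restrict (Ioc 0 T)) :=
  ((intervalIntegral.continuousOn_primitive
    (integrableOn_Icc_iff_integrableOn_Ioc (μ := volume) |>.2 hv)).aemeasurable
    measurableSet_Icc).mono_measure (Measure.restrict_mono Ioc_subset_Icc_self le_rfl)

theorem aemeasurable_runningCost (hh : Measurable (Function.uncurry h))
    (hℓ : AEMeasurable ℓ (volume.restrict (Ioc 0 T))) (hv : IntegrableOn v (Ioc 0 T)) :
    AEMeasurable (fun t => ENNReal.ofReal (h (ℓ t) (∫ s in Ioc 0 t, v s)))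
      (volume.restrict (Ioc 0 T)) :=
  ENNReal.measurable_ofReal.comp_aemeasurable <|
    hh.comp_aemeasurable (hℓ.prodMk (aemeasurable_primitive hv))

theorem integral_Ioc_combo (hv : IntegrableOn v (Ioc 0 T)) (hw : IntegrableOn w (Ioc 0 T))
    {t : ℝ} (ht : t ≤ T) (a b : ℝ) :
    ∫ s in Ioc 0 t, (a • v + b • w) s =
      a • (∫ s in Ioc 0 t, v s) + b • ∫ s in Ioc 0 t, w s := by
  have hsub : Ioc (0 : ℝ) t ⊆ Ioc 0 T := Ioc_subset_Ioc_right ht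
  simp only [Pi.add_apply, Pi.smul_apply]
  rw [integral_add (f := fun s => a • v s) (g := fun s => b • w s)
    ((hv.mono_set hsub).smul a) ((hw.mono_set hsub).smul b), integral_smul, integral_smul]

theorem ofReal_integral_inner_combo (hf : ContinuousOn f (Icc 0 T))
    (hf0 : ∀ t ∈ Icc 0 T, f t ∈ orthant k) (hv : IntegrableOn v (Ioc 0 T))
    (hw : IntegrableOn w (Ioc 0 T)) (hv0 : ∀ t, v t ∈ orthant k) (hw0 : ∀ t, w t ∈ orthant k)
    {a b : ℝ} (ha : 0 ≤ a) (hb : 0 ≤ b) :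
    ENNReal.ofReal (∫ t in Ioc 0 T, ⟪f t, (a • v + b • w) t⟫) =
      ENNReal.ofReal a * ENNReal.ofReal (∫ t in Ioc 0 T, ⟪f t, v t⟫) +
        ENNReal.ofReal b * ENNReal.ofReal (∫ t in Ioc 0 T, ⟪f t, w t⟫) := by
  have hnonneg : ∀ z : ℝ → Rvec k, (∀ t, z t ∈ orthant k) → 0 ≤ ∫ t in Ioc 0 T, ⟪f t, z t⟫ :=
    fun z hz => setIntegral_nonneg measurableSet_Ioc fun t ht =>
      inner_nonneg_of_mem_orthant (hf0 t (Ioc_subset_Icc_self ht)) (hz t)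
  have hlin : ∫ t in Ioc 0 T, ⟪f t, (a • v + b • w) t⟫ =
      a * (∫ t in Ioc 0 T, ⟪f t, v t⟫) + b * ∫ t in Ioc 0 T, ⟪f t, w t⟫ := by
    simp only [Pi.add_apply, Pi.smul_apply, inner_add_right, real_inner_smul_right]
    rw [integral_add ((integrableOn_inner_of_continuousOn hf hv).const_mul a)
      ((integrableOn_inner_of_continuousOn hf hw).const_mul b), integral_const_mul,
      integral_const_mul]
  rw [hlin, ENNReal.ofReal_add (mul_nonneg ha (hnonneg v hv0)) (mul_nonneg hb (hnonneg w hw0)),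
    ENNReal.ofReal_mul ha, ENNReal.ofReal_mul hb]

theorem lintegral_runningCost_combo_le (hh : Measurable (Function.uncurry h))
    (hh0 : ∀ l, ∀ a ∈ orthant k, 0 ≤ h l a) (hhc : ∀ l, ConvexOn ℝ (orthant k) (h l))
    (hℓ : AEMeasurable ℓ (volume.restrict (Ioc 0 T))) (hv : IntegrableOn v (Ioc 0 T))
    (hw : IntegrableOn w (Ioc 0 T)) (hv0 : ∀ t, v t ∈ orthant k) (hw0 : ∀ t, w t ∈ orthant k)
    {a b : ℝ} (ha : 0 ≤ a) (hb : 0 ≤ b) (hab : a + b = 1) :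
    ∫⁻ t in Ioc 0 T, ENNReal.ofReal (h (ℓ t) (∫ s in Ioc 0 t, (a • v + b • w) s)) ≤
      ENNReal.ofReal a * (∫⁻ t in Ioc 0 T, ENNReal.ofReal (h (ℓ t) (∫ s in Ioc 0 t, v s))) +
        ENNReal.ofReal b * ∫⁻ t in Ioc 0 T, ENNReal.ofReal (h (ℓ t) (∫ s in Ioc 0 t, w s)) := by
  rw [← lintegral_const_mul' _ _ ENNReal.ofReal_ne_top,
    ← lintegral_const_mul' _ _ ENNReal.ofReal_ne_top,
    ← lintegral_add_left' ((aemeasurable_runningCost hh hℓ hv).const_mul _)]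
  refine setLIntegral_mono' measurableSet_Ioc fun t ht => ?_
  rw [integral_Ioc_combo hv hw ht.2]
  exact (hhc (ℓ t)).ofReal_combo_le (hh0 (ℓ t)) (integral_mem_orthant (.of_forall hv0))
    (integral_mem_orthant (.of_forall hw0)) ha hb hab

theorem pathCost_combo_le (hf : ContinuousOn f (Icc 0 T)) (hf0 : ∀ t ∈ Icc 0 T, f t ∈ orthant k)
    (hh : Measurable (Function.uncurry h)) (hh0 : ∀ l, ∀ a ∈ orthant k, 0 ≤ h l a)
    (hg0 : ∀ l, ∀ a ∈ orthant k, 0 ≤ g l a) (hhc : ∀ l, ConvexOn ℝ (orthant k) (h l))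
    (hgc : ∀ l, ConvexOn ℝ (orthant k) (g l)) (hℓ : AEMeasurable ℓ (volume.restrict (Ioc 0 T)))
    (hv : IntegrableOn v (Ioc 0 T)) (hw : IntegrableOn w (Ioc 0 T))
    (hv0 : ∀ t, v t ∈ orthant k) (hw0 : ∀ t, w t ∈ orthant k)
    {a b : ℝ} (ha : 0 ≤ a) (hb : 0 ≤ b) (hab : a + b = 1) :
    pathCost T f h g ℓ (a • v + b • w) ≤
      ENNReal.ofReal a * pathCost T f h g ℓ v + ENNReal.ofReal b * pathCost T f h g ℓ w := by
  have hterminal := (hgc (ℓ T)).ofReal_combo_le (hg0 (ℓ T))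
    (integral_mem_orthant (μ := volume.restrict (Ioc 0 T)) (.of_forall hv0))
    (integral_mem_orthant (μ := volume.restrict (Ioc 0 T)) (.of_forall hw0)) ha hb hab
  rw [← integral_Ioc_combo hv hw le_rfl] at hterminal
  calc pathCost T f h g ℓ (a • v + b • w)
      ≤ _ + _ + _ := add_le_add (add_le_add
          (ofReal_integral_inner_combo hf hf0 hv hw hv0 hw0 ha hb).le
          (lintegral_runningCost_combo_le hh hh0 hhc hℓ hv hw hv0 hw0 ha hb hab)) hterminal
    _ = _ := by unfold pathCost; ring

theorem tendsto_integral_Ioc_of_tendsto_ae {vs : ℕ → ℝ → Rvec k} {C : ℝ}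
    (hvs : ∀ j, AEStronglyMeasurable (vs j) (volume.restrict (Ioc 0 T)))
    (hC : ∀ j t, ‖vs j t‖ ≤ C)
    (hlim : ∀ᵐ t ∂volume.restrict (Ioc 0 T), Tendsto (fun j => vs j t) atTop (𝓝 (v t)))
    {t : ℝ} (ht : t ≤ T) :
    Tendsto (fun j => ∫ s in Ioc 0 t, vs j s) atTop (𝓝 (∫ s in Ioc 0 t, v s)) := by
  have hμ : volume.restrict (Ioc 0 t) ≤ volume.restrict (Ioc (0 : ℝ) T) :=
    Measure.restrict_mono (Ioc_subset_Ioc_right ht) le_rfl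
  exact tendsto_integral_of_dominated_convergence (fun _ => C)
    (fun j => (hvs j).mono_measure hμ) (integrable_const C)
    (fun j => .of_forall (hC j)) (ae_mono hμ hlim)

theorem ofReal_integral_inner_tendsto (hf : ContinuousOn f (Icc 0 T))
    {vs : ℕ → ℝ → Rvec k} {C : ℝ}
    (hvs : ∀ j, AEStronglyMeasurable (vs j) (volume.restrict (Ioc 0 T)))
    (hC : ∀ j t, ‖vs j t‖ ≤ C)
    (hlim : ∀ᵐ t ∂volume.restrict (Ioc 0 T), Tendsto (fun j => vs j t) atTop (𝓝 (v t))) :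
    Tendsto (fun j => ENNReal.ofReal (∫ t in Ioc 0 T, ⟪f t, vs j t⟫)) atTop
      (𝓝 (ENNReal.ofReal (∫ t in Ioc 0 T, ⟪f t, v t⟫))) := by
  obtain ⟨B, hB⟩ := isCompact_Icc.exists_bound_of_continuousOn hf
  have hfm := (hf.aestronglyMeasurable (μ := volume) measurableSet_Icc).mono_set
    (Ioc_subset_Icc_self (a := 0))
  refine (ENNReal.continuous_ofReal.tendsto _).comp <|
    tendsto_integral_of_dominated_convergence (fun _ => B * C) (fun j => hfm.inner (hvs j))
      (integrable_const _) (fun j => ?_) (hlim.mono fun t ht => tendsto_const_nhds.inner ht)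
  filter_upwards [ae_restrict_mem measurableSet_Ioc] with t ht
  have hBt := hB t (Ioc_subset_Icc_self ht)
  exact (norm_inner_le_norm _ _).trans
    (mul_le_mul hBt (hC j t) (norm_nonneg _) ((norm_nonneg _).trans hBt))

theorem lintegral_runningCost_le_liminf (hh : Measurable (Function.uncurry h))
    (hhc : ∀ l, ∀ a ∈ orthant k, ContinuousWithinAt (h l) (orthant k) a)
    (hℓ : AEMeasurable ℓ (volume.restrict (Ioc 0 T))) {vs : ℕ → ℝ → Rvec k} {C : ℝ}
    (hvs : ∀ j, AEStronglyMeasurable (vs j) (volume.restrict (Ioc 0 T)))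
    (hvs0 : ∀ j t, vs j t ∈ orthant k) (hC : ∀ j t, ‖vs j t‖ ≤ C)
    (hlim : ∀ᵐ t ∂volume.restrict (Ioc 0 T), Tendsto (fun j => vs j t) atTop (𝓝 (v t))) :
    ∫⁻ t in Ioc 0 T, ENNReal.ofReal (h (ℓ t) (∫ s in Ioc 0 t, v s)) ≤
      liminf (fun j => ∫⁻ t in Ioc 0 T, ENNReal.ofReal (h (ℓ t) (∫ s in Ioc 0 t, vs j s)))
        atTop := by
  have hprim0 : ∀ j t, ∫ s in Ioc 0 t, vs j s ∈ orthant k := fun j t =>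
    integral_mem_orthant (.of_forall (hvs0 j))
  have hpoint : ∀ t ∈ Ioc 0 T, Tendsto (fun j => ENNReal.ofReal (h (ℓ t) (∫ s in Ioc 0 t, vs j s)))
      atTop (𝓝 (ENNReal.ofReal (h (ℓ t) (∫ s in Ioc 0 t, v s)))) := fun t ht =>
    have hA := tendsto_integral_Ioc_of_tendsto_ae hvs hC hlim ht.2
    (hhc _ _ ((isClosed_orthant k).mem_of_tendsto hA (.of_forall (hprim0 · t)))).tendsto_ofReal_comp
      hA (hprim0 · t)
  calc _ = ∫⁻ t in Ioc 0 T,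
        liminf (fun j => ENNReal.ofReal (h (ℓ t) (∫ s in Ioc 0 t, vs j s))) atTop :=
        setLIntegral_congr_fun measurableSet_Ioc fun t ht => (hpoint t ht).liminf_eq.symm
    _ ≤ _ := lintegral_liminf_le' fun j => aemeasurable_runningCost hh hℓ <|
        (integrable_const C).mono' (hvs j) (.of_forall (hC j))

theorem pathCost_le_liminf (hf : ContinuousOn f (Icc 0 T)) (hh : Measurable (Function.uncurry h))
    (hhc : ∀ l, ∀ a ∈ orthant k, ContinuousWithinAt (h l) (orthant k) a)
    (hgc : ∀ l, ∀ a ∈ orthant k, ContinuousWithinAt (g l) (orthant k) a)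
    (hℓ : AEMeasurable ℓ (volume.restrict (Ioc 0 T))) {vs : ℕ → ℝ → Rvec k} {C : ℝ}
    (hvs : ∀ j, AEStronglyMeasurable (vs j) (volume.restrict (Ioc 0 T)))
    (hvs0 : ∀ j t, vs j t ∈ orthant k) (hC : ∀ j t, ‖vs j t‖ ≤ C)
    (hlim : ∀ᵐ t ∂volume.restrict (Ioc 0 T), Tendsto (fun j => vs j t) atTop (𝓝 (v t))) :
    pathCost T f h g ℓ v ≤ liminf (fun j => pathCost T f h g ℓ (vs j)) atTop := by
  have hprim0 : ∀ j, ∫ s in Ioc 0 T, vs j s ∈ orthant k := fun j =>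
    integral_mem_orthant (.of_forall (hvs0 j))
  have hA := tendsto_integral_Ioc_of_tendsto_ae hvs hC hlim le_rfl
  have hterminal := (hgc (ℓ T) _ ((isClosed_orthant k).mem_of_tendsto hA
    (.of_forall hprim0))).tendsto_ofReal_comp hA hprim0
  calc pathCost T f h g ℓ v
      ≤ _ + _ + _ := add_le_add (add_le_add
          (ofReal_integral_inner_tendsto hf hvs hC hlim).liminf_eq.ge
          (lintegral_runningCost_le_liminf hh hhc hℓ hvs hvs0 hC hlim)) hterminal.liminf_eq.ge
    _ ≤ _ := add_le_add ENNReal.le_liminf_add le_rfl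
    _ ≤ _ := ENNReal.le_liminf_add

end PathCost

section JointMeasurability

variable {Ω E : Type*} [MeasurableSpace Ω]

theorem tendsto_ceil_mul_div_nhdsWithin_Ici (s : ℝ) (hs : 0 ≤ s) :
    Tendsto (fun m : ℕ => (⌈s * (m + 1)⌉₊ : ℝ) / (m + 1)) atTop (𝓝[≥] s) := by
  have hge : ∀ m : ℕ, s ≤ (⌈s * (m + 1)⌉₊ : ℝ) / (m + 1) := fun m =>
    (le_div_iff₀ (by positivity)).2 (Nat.le_ceil _)
  have hle : ∀ m : ℕ, (⌈s * (m + 1)⌉₊ : ℝ) / (m + 1) ≤ s + 1 / (m + 1) := fun m => by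
    rw [div_le_iff₀ (by positivity), add_mul, one_div_mul_cancel (by positivity)]
    exact (Nat.ceil_lt_add_one (by positivity)).le
  refine tendsto_nhdsWithin_iff.2 ⟨?_, .of_forall hge⟩
  refine tendsto_of_tendsto_of_tendsto_of_le_of_le tendsto_const_nhds ?_ hge hle
  simpa using tendsto_const_nhds.add (tendsto_one_div_add_atTop_nhds_zero_nat (𝕜 := ℝ))

theorem measurable_projIcc_of_continuousWithinAt_Ici [TopologicalSpace E]
    [TopologicalSpace.PseudoMetrizableSpace E] [MeasurableSpace E] [BorelSpace E] {T : ℝ}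
    (hT : 0 ≤ T) {X : Ω → ℝ → E} (hX : ∀ t, Measurable fun ω => X ω t)
    (hright : ∀ ω, ∀ t ∈ Ico 0 T, ContinuousWithinAt (X ω) (Ici t) t) :
    Measurable fun p : Ω × ℝ => X p.1 (projIcc 0 T hT p.2) := by
  -- approximate each time from the right by grid points, so that only countably many
  -- times (each with a measurable `X · t`) occur
  set θ : ℕ → ℝ → ℝ := fun m s => min T ((⌈s * (m + 1)⌉₊ : ℝ) / (m + 1))
  have hθ : ∀ m, Measurable fun p : Ω × ℝ => X p.1 (θ m (projIcc 0 T hT p.2)) := fun m =>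
    have hG : Measurable fun q : Ω × ℕ => X q.1 (min T ((q.2 : ℝ) / (m + 1))) :=
      measurable_from_prod_countable_left fun j => hX (min T ((j : ℝ) / (m + 1)))
    hG.comp <| measurable_fst.prodMk <| Nat.measurable_ceil.comp <|
      ((continuous_subtype_val.comp continuous_projIcc).measurable.comp measurable_snd).mul_const _
  refine measurable_of_tendsto_metrizable hθ (tendsto_pi_nhds.2 fun ⟨ω, t⟩ => ?_)
  obtain ⟨hs0, hsT⟩ := (projIcc 0 T hT t).2
  generalize (projIcc 0 T hT t : ℝ) = s at hs0 hsT ⊢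
  obtain ⟨hlim, hge⟩ := tendsto_nhdsWithin_iff.1 <| tendsto_ceil_mul_div_nhdsWithin_Ici s hs0
  rcases hsT.eq_or_lt with hsT | hsT
  · subst hsT
    have hθs : ∀ m, θ m s = s := fun m =>
      min_eq_left <| (le_div_iff₀ (by positivity)).2 (Nat.le_ceil (s * (m + 1)))
    simp only [hθs]
    exact tendsto_const_nhds
  · refine (hright ω s ⟨hs0, hsT⟩).tendsto.comp <|
      tendsto_nhdsWithin_iff.2 ⟨?_, hge.mono fun m hm => le_min hsT.le hm⟩
    have := (((continuous_const (y := T)).min continuous_id).tendsto s).comp hlim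
    rwa [id, min_eq_right hsT.le] at this

theorem MeasureTheory.StronglyMeasurable.setIntegral_Ioc_prod [NormedAddCommGroup E]
    [NormedSpace ℝ E] {U : Ω × ℝ → E} (hU : StronglyMeasurable U) (a : ℝ) :
    StronglyMeasurable fun p : Ω × ℝ => ∫ s in Ioc a p.2, U (p.1, s) := by
  have hset : MeasurableSet {q : (Ω × ℝ) × ℝ | q.2 ∈ Ioc a q.1.2} :=
    (_root_.measurableSet_lt measurable_const measurable_snd).inter
      (_root_.measurableSet_le measurable_snd measurable_fst.snd)
  have := ((hU.comp_measurable (measurable_fst.fst.prodMk measurable_snd)).indicator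
    hset).integral_prod_right' (ν := (volume : Measure ℝ))
  convert this using 2 with p
  rw [← integral_indicator measurableSet_Ioc]
  rfl

end JointMeasurability

theorem aemeasurable_restrict_Ioc_of_measurable_projIcc {E : Type*} [MeasurableSpace E]
    {T : ℝ} (hT : 0 ≤ T) {x : ℝ → E} (hx : Measurable fun t => x (projIcc 0 T hT t)) :
    AEMeasurable x (volume.restrict (Ioc 0 T)) :=
  ⟨_, hx, ae_restrict_of_forall_mem measurableSet_Ioc fun t ht => by
    simp only [projIcc_of_mem hT (Ioc_subset_Icc_self ht)]⟩

section Controls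

variable {Ω : Type*} [mΩ : MeasurableSpace Ω] {μ : Measure Ω} {d k : ℕ} {T : ℝ}
  {L : Ω → ℝ → Rvec d} {n : ℕ} {u : ℝ → Ω → Rvec k}

theorem sigmaBarPlus_le (hμ : μ.IsComplete) (hL : ∀ s, Measurable fun ω => L ω s) (t : ℝ) :
    sigmaBarPlus μ T L t ≤ mΩ :=
  (biInf_le _ (lt_add_one t)).trans <| sup_le (iSup₂_le fun s _ => (hL s).comap_le)
    (generateFrom_le fun N hN => hμ.out N hN)

-- A control is unconstrained outside `[0,T]`; capping the time gives a jointly measurable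
-- version of it on `Ω × [0,T]`.
theorem measurable_projIcc_of_mem_Ucap (hT : 0 ≤ T) (hμ : μ.IsComplete)
    (hL : ∀ s, Measurable fun ω => L ω s) (hu : u ∈ Ucap μ k T L n) :
    Measurable fun p : Ω × ℝ => u (projIcc 0 T hT p.2) p.1 := by
  have hprog : Measurable fun p : Icc (0 : ℝ) T × Ω => u p.1 p.2 :=
    (hu.1 T ⟨hT, le_rfl⟩).mono (sup_le_sup le_rfl (comap_mono (sigmaBarPlus_le hμ hL T))) le_rfl
  exact hprog.comp
    (((continuous_projIcc (h := hT)).measurable.comp measurable_snd).prodMk measurable_fst)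

theorem mem_orthant_of_mem_Ucap (hu : u ∈ Ucap μ k T L n) (t : ℝ) (ω : Ω) :
    u t ω ∈ orthant k :=
  fun i => (hu.2 t ω i).1

theorem norm_le_of_mem_Ucap (hu : u ∈ Ucap μ k T L n) (t : ℝ) (ω : Ω) :
    ‖u t ω‖ ≤ n * √k := by
  rw [EuclideanSpace.norm_eq, ← Real.sqrt_sq (Nat.cast_nonneg n),
    ← Real.sqrt_mul' _ (Nat.cast_nonneg k)]
  refine Real.sqrt_le_sqrt ?_
  calc ∑ i, ‖u t ω i‖ ^ 2 ≤ ∑ _i : Fin k, (n : ℝ) ^ 2 := Finset.sum_le_sum fun i _ => by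
        rw [Real.norm_of_nonneg (hu.2 t ω i).1]
        exact pow_le_pow_left₀ (hu.2 t ω i).1 (hu.2 t ω i).2 2
    _ = n ^ 2 * k := by simp [mul_comm]

theorem convex_Ucap : Convex ℝ (Ucap μ k T L n) := by
  intro u hu v hv a b ha hb hab
  refine ⟨fun t ht => ((hu.1 t ht).const_smul a).add ((hv.1 t ht).const_smul b), fun t ω i => ?_⟩
  have hui := hu.2 t ω i
  have hvi := hv.2 t ω i
  simp only [Pi.add_apply, Pi.smul_apply, PiLp.add_apply, PiLp.smul_apply, smul_eq_mul]
  constructor <;> nlinarith [hui.1, hui.2, hvi.1, hvi.2]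

theorem zero_mem_Ucap : (0 : ℝ → Ω → Rvec k) ∈ Ucap μ k T L n :=
  ⟨fun _ _ => measurable_const, fun _ _ _ => ⟨le_rfl, Nat.cast_nonneg n⟩⟩

theorem aestronglyMeasurable_of_mem_Ucap (hT : 0 ≤ T) (hμ : μ.IsComplete)
    (hL : ∀ s, Measurable fun ω => L ω s) (hu : u ∈ Ucap μ k T L n) (ω : Ω) :
    AEStronglyMeasurable (fun t => u t ω) (volume.restrict (Ioc 0 T)) :=
  (aemeasurable_restrict_Ioc_of_measurable_projIcc hT
    ((measurable_projIcc_of_mem_Ucap hT hμ hL hu).comp measurable_prodMk_left)).aestronglyMeasurable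

theorem integrableOn_of_mem_Ucap (hT : 0 ≤ T) (hμ : μ.IsComplete)
    (hL : ∀ s, Measurable fun ω => L ω s) (hu : u ∈ Ucap μ k T L n) (ω : Ω) :
    IntegrableOn (fun t => u t ω) (Ioc 0 T) :=
  (integrable_const _).mono' (aestronglyMeasurable_of_mem_Ucap hT hμ hL hu ω)
    (.of_forall (norm_le_of_mem_Ucap hu · ω))

theorem aemeasurable_of_continuousWithinAt_Ici (hT : 0 ≤ T) (hL : ∀ s, Measurable fun ω => L ω s)
    (hLr : ∀ ω, ∀ t ∈ Ico 0 T, ContinuousWithinAt (L ω) (Ici t) t) (ω : Ω) :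
    AEMeasurable (L ω) (volume.restrict (Ioc 0 T)) :=
  aemeasurable_restrict_Ioc_of_measurable_projIcc hT
    ((measurable_projIcc_of_continuousWithinAt_Ici hT hL hLr).comp measurable_prodMk_left)

theorem aestronglyMeasurable_prod_of_mem_Ucap (hT : 0 ≤ T) (hμ : μ.IsComplete)
    (hL : ∀ s, Measurable fun ω => L ω s) (hu : u ∈ Ucap μ k T L n) :
    AEStronglyMeasurable (fun p : Ω × ℝ => u p.2 p.1)
      (μ.prod (volume.restrict (Ioc 0 T))) := by
  refine (measurable_projIcc_of_mem_Ucap hT hμ hL hu).aestronglyMeasurable.congr ?_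
  filter_upwards [Measure.quasiMeasurePreserving_snd.ae (ae_restrict_mem measurableSet_Ioc)]
    with p hp
  simp only [projIcc_of_mem hT (Ioc_subset_Icc_self hp)]

theorem exists_mem_Ucap_of_tendsto {us : ℕ → ℝ → Ω → Rvec k}
    (hus : ∀ j, us j ∈ Ucap μ k T L n) :
    ∃ w ∈ Ucap μ k T L n, ∀ t ω x, Tendsto (fun j => us j t ω) atTop (𝓝 x) → w t ω = x := by
  refine ⟨fun t ω => WithLp.toLp 2 fun i => max 0 (min (n : ℝ)
    (limsup (fun j => us j t ω i) atTop)), ⟨fun t ht => ?_, fun t ω i => ?_⟩, ?_⟩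
  · let := @Prod.instMeasurableSpace (Icc (0 : ℝ) t) Ω _ (sigmaBarPlus μ T L t)
    refine (WithLp.measurable_toLp 2 _).comp (measurable_pi_lambda _ fun i => ?_)
    refine measurable_const.max (measurable_const.min (Measurable.limsup fun j => ?_))
    exact (measurable_pi_apply i).comp ((WithLp.measurable_ofLp 2 _).comp ((hus j).1 t ht))
  · exact ⟨le_max_left _ _, max_le (Nat.cast_nonneg n) (min_le_left _ _)⟩
  · intro t ω x hx
    ext i
    have hxi : Tendsto (fun j => us j t ω i) atTop (𝓝 (x i)) :=
      ((EuclideanSpace.proj i).continuous.tendsto x).comp hx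
    have hx0 : 0 ≤ x i := ge_of_tendsto' hxi fun j => ((hus j).2 t ω i).1
    have hxn : x i ≤ n := le_of_tendsto' hxi fun j => ((hus j).2 t ω i).2
    simp [hxi.limsup_eq, min_eq_right hxn, max_eq_right hx0]

theorem measurable_pathCost {f : ℝ → Rvec k} {h g : Rvec d → Rvec k → ℝ} (hT : 0 ≤ T)
    (hμ : μ.IsComplete) (hL : ∀ s, Measurable fun ω => L ω s)
    (hLr : ∀ ω, ∀ t ∈ Ico 0 T, ContinuousWithinAt (L ω) (Ici t) t)
    (hf : ContinuousOn f (Icc 0 T)) (hh : Measurable (Function.uncurry h))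
    (hg : Measurable (Function.uncurry g)) (hu : u ∈ Ucap μ k T L n) :
    Measurable fun ω => pathCost T f h g (L ω) (fun t => u t ω) := by
  set π : ℝ → ℝ := fun t => projIcc 0 T hT t
  have hπ : ∀ t ∈ Icc 0 T, t = π t := fun t ht => by simp [π, projIcc_of_mem hT ht]
  have hU := measurable_projIcc_of_mem_Ucap hT hμ hL hu
  have hLc := measurable_projIcc_of_continuousWithinAt_Ici hT hL hLr
  have hA := (hU.stronglyMeasurable.setIntegral_Ioc_prod 0).measurable
  have hf' : Continuous fun t => f (π t) :=
    hf.comp_continuous continuous_projIcc.subtype_val fun t => (projIcc 0 T hT t).2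
  have hcost : ∀ ω, pathCost T f h g (L ω) (fun t => u t ω) =
      pathCost T (fun t => f (π t)) h g (fun t => L ω (π t)) (fun t => u (π t) ω) := fun ω =>
    pathCost_congr_of_eqOn hT (fun t ht => congrArg f (hπ t ht))
      (fun t ht => congrArg (L ω) (hπ t ht)) (fun t ht => congrArg (u · ω) (hπ t ht))
  have hrun : Measurable fun ω => ENNReal.ofReal (∫ t in Ioc 0 T, ⟪f (π t), u (π t) ω⟫) :=
    ENNReal.measurable_ofReal.comp <| StronglyMeasurable.measurable <|
      ((hf'.measurable.comp measurable_snd).inner hU).stronglyMeasurable.integral_prod_right'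
  have hstate : Measurable fun ω =>
      ∫⁻ t in Ioc 0 T, ENNReal.ofReal (h (L ω (π t)) (∫ s in Ioc 0 t, u (π s) ω)) :=
    Measurable.lintegral_prod_right' <| ENNReal.measurable_ofReal.comp <| hh.comp <|
      hLc.prodMk hA
  have hterm : Measurable fun ω => ENNReal.ofReal (g (L ω (π T)) (∫ s in Ioc 0 T, u (π s) ω)) :=
    ENNReal.measurable_ofReal.comp <| hg.comp <|
      (hLc.comp measurable_prodMk_right).prodMk (hA.comp measurable_prodMk_right)
  rw [funext hcost]
  exact (hrun.add hstate).add hterm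

end Controls

section CapCost

variable {Ω : Type*} [MeasurableSpace Ω] {μ : Measure Ω} {d k : ℕ} {T : ℝ}
  {L : Ω → ℝ → Rvec d} {n : ℕ} {f : ℝ → Rvec k} {h g : Rvec d → Rvec k → ℝ}

theorem capCost_congr_ae {U V : Ω × ℝ → Rvec k}
    (hUV : U =ᵐ[μ.prod (volume.restrict (Ioc 0 T))] V) :
    capCost μ T L f h g (fun t ω => U (ω, t)) = capCost μ T L f h g (fun t ω => V (ω, t)) :=
  lintegral_congr_ae <| (Measure.ae_ae_of_ae_prod hUV).mono fun _ hω => pathCost_congr_ae hω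

theorem capCost_combo_le (hT : 0 ≤ T) (hμ : μ.IsComplete) (hL : ∀ s, Measurable fun ω => L ω s)
    (hLr : ∀ ω, ∀ t ∈ Ico 0 T, ContinuousWithinAt (L ω) (Ici t) t)
    (hf : ContinuousOn f (Icc 0 T)) (hf0 : ∀ t ∈ Icc 0 T, f t ∈ orthant k)
    (hh : Measurable (Function.uncurry h)) (hg : Measurable (Function.uncurry g))
    (hh0 : ∀ l, ∀ a ∈ orthant k, 0 ≤ h l a) (hg0 : ∀ l, ∀ a ∈ orthant k, 0 ≤ g l a)
    (hhc : ∀ l, ConvexOn ℝ (orthant k) (h l)) (hgc : ∀ l, ConvexOn ℝ (orthant k) (g l))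
    {u v : ℝ → Ω → Rvec k} (hu : u ∈ Ucap μ k T L n) (hv : v ∈ Ucap μ k T L n)
    {a b : ℝ} (ha : 0 ≤ a) (hb : 0 ≤ b) (hab : a + b = 1) :
    capCost μ T L f h g (a • u + b • v) ≤
      ENNReal.ofReal a * capCost μ T L f h g u + ENNReal.ofReal b * capCost μ T L f h g v := by
  have hmu := measurable_pathCost hT hμ hL hLr hf hh hg hu
  simp only [capCost_eq_lintegral_pathCost]
  rw [← lintegral_const_mul _ hmu,
    ← lintegral_const_mul _ (measurable_pathCost hT hμ hL hLr hf hh hg hv),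
    ← lintegral_add_left (hmu.const_mul _)]
  exact lintegral_mono fun ω => pathCost_combo_le hf hf0 hh hh0 hg0 hhc hgc
    (aemeasurable_of_continuousWithinAt_Ici hT hL hLr ω) (integrableOn_of_mem_Ucap hT hμ hL hu ω)
    (integrableOn_of_mem_Ucap hT hμ hL hv ω) (mem_orthant_of_mem_Ucap hu · ω)
    (mem_orthant_of_mem_Ucap hv · ω) ha hb hab

theorem capCost_le_liminf (hT : 0 ≤ T) (hμ : μ.IsComplete) (hL : ∀ s, Measurable fun ω => L ω s)
    (hLr : ∀ ω, ∀ t ∈ Ico 0 T, ContinuousWithinAt (L ω) (Ici t) t)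
    (hf : ContinuousOn f (Icc 0 T)) (hh : Measurable (Function.uncurry h))
    (hg : Measurable (Function.uncurry g))
    (hhc : ∀ l, ∀ a ∈ orthant k, ContinuousWithinAt (h l) (orthant k) a)
    (hgc : ∀ l, ∀ a ∈ orthant k, ContinuousWithinAt (g l) (orthant k) a)
    {us : ℕ → ℝ → Ω → Rvec k} (hus : ∀ j, us j ∈ Ucap μ k T L n) {v : ℝ → Ω → Rvec k}
    (hlim : ∀ᵐ p ∂μ.prod (volume.restrict (Ioc 0 T)),
      Tendsto (fun j => us j p.2 p.1) atTop (𝓝 (v p.2 p.1))) :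
    capCost μ T L f h g v ≤ liminf (fun j => capCost μ T L f h g (us j)) atTop := by
  simp only [capCost_eq_lintegral_pathCost]
  refine le_trans (lintegral_mono_ae ?_)
    (lintegral_liminf_le fun j => measurable_pathCost hT hμ hL hLr hf hh hg (hus j))
  filter_upwards [Measure.ae_ae_of_ae_prod hlim] with ω hω
  exact pathCost_le_liminf hf hh hhc hgc (aemeasurable_of_continuousWithinAt_Ici hT hL hLr ω)
    (fun j => aestronglyMeasurable_of_mem_Ucap hT hμ hL (hus j) ω)
    (fun j t => mem_orthant_of_mem_Ucap (hus j) t ω)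
    (fun j t => norm_le_of_mem_Ucap (hus j) t ω) hω

end CapCost

section Minimizer

variable {Ω : Type*} [MeasurableSpace Ω] {μ : Measure Ω} {d k : ℕ} {T : ℝ}
  {L : Ω → ℝ → Rvec d} {n : ℕ} {f : ℝ → Rvec k} {h g : Rvec d → Rvec k → ℝ}

theorem quasiconvexOn_capCost (hT : 0 ≤ T) (hμ : μ.IsComplete)
    (hL : ∀ s, Measurable fun ω => L ω s)
    (hLr : ∀ ω, ∀ t ∈ Ico 0 T, ContinuousWithinAt (L ω) (Ici t) t)
    (hf : ContinuousOn f (Icc 0 T)) (hf0 : ∀ t ∈ Icc 0 T, f t ∈ orthant k)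
    (hh : Measurable (Function.uncurry h)) (hg : Measurable (Function.uncurry g))
    (hh0 : ∀ l, ∀ a ∈ orthant k, 0 ≤ h l a) (hg0 : ∀ l, ∀ a ∈ orthant k, 0 ≤ g l a)
    (hhc : ∀ l, ConvexOn ℝ (orthant k) (h l)) (hgc : ∀ l, ConvexOn ℝ (orthant k) (g l)) :
    QuasiconvexOn ℝ (Ucap μ k T L n) (capCost μ T L f h g) := by
  rintro c u ⟨hu, huc⟩ v ⟨hv, hvc⟩ a b ha hb hab
  refine ⟨convex_Ucap hu hv ha hb hab, ?_⟩
  calc capCost μ T L f h g (a • u + b • v)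
      ≤ ENNReal.ofReal a * capCost μ T L f h g u + ENNReal.ofReal b * capCost μ T L f h g v :=
        capCost_combo_le hT hμ hL hLr hf hf0 hh hg hh0 hg0 hhc hgc hu hv ha hb hab
    _ ≤ ENNReal.ofReal a * c + ENNReal.ofReal b * c := by gcongr
    _ = c := by rw [← add_mul, ← ENNReal.ofReal_add ha hb, hab, ENNReal.ofReal_one, one_mul]

theorem exists_isMinOn_capCost [IsFiniteMeasure μ] (hT : 0 ≤ T) (hμ : μ.IsComplete)
    (hL : ∀ s, Measurable fun ω => L ω s)
    (hLr : ∀ ω, ∀ t ∈ Ico 0 T, ContinuousWithinAt (L ω) (Ici t) t)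
    (hf : ContinuousOn f (Icc 0 T)) (hf0 : ∀ t ∈ Icc 0 T, f t ∈ orthant k)
    (hh : Measurable (Function.uncurry h)) (hg : Measurable (Function.uncurry g))
    (hh0 : ∀ l, ∀ a ∈ orthant k, 0 ≤ h l a) (hg0 : ∀ l, ∀ a ∈ orthant k, 0 ≤ g l a)
    (hhc : ∀ l, ConvexOn ℝ (orthant k) (h l)) (hgc : ∀ l, ConvexOn ℝ (orthant k) (g l))
    (hhw : ∀ l, ∀ a ∈ orthant k, ContinuousWithinAt (h l) (orthant k) a)
    (hgw : ∀ l, ∀ a ∈ orthant k, ContinuousWithinAt (g l) (orthant k) a) :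
    ∃ u ∈ Ucap μ k T L n, IsMinOn (capCost μ T L f h g) (Ucap μ k T L n) u := by
  -- `U ↦ fun t ω => U (ω, t)` is linear, so this is `quasiconvexOn_capCost` read through it.
  have hconv : QuasiconvexOn ℝ {U : Ω × ℝ → Rvec k | (fun t ω => U (ω, t)) ∈ Ucap μ k T L n}
      fun U => capCost μ T L f h g fun t ω => U (ω, t) := fun c _ hU _ hV _ _ ha hb hab =>
    quasiconvexOn_capCost hT hμ hL hLr hf hf0 hh hg hh0 hg0 hhc hgc c hU hV ha hb hab
  obtain ⟨U, hU, hmin⟩ := hconv.exists_isMinOn_of_le_liminf_ae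
    (ν := μ.prod (volume.restrict (Ioc 0 T))) ⟨0, zero_mem_Ucap⟩
    (fun _ hU => aestronglyMeasurable_prod_of_mem_Ucap hT hμ hL hU)
    (R := n * √k) (by positivity) (fun _ hU p => norm_le_of_mem_Ucap hU p.2 p.1)
    (fun _ hus _ hlim => by
      obtain ⟨w, hw, hwlim⟩ := exists_mem_Ucap_of_tendsto hus
      exact ⟨fun p => w p.2 p.1, hw, hlim.mono fun p hp => hwlim _ _ _ hp⟩)
    (fun _ _ hUV => capCost_congr_ae hUV)
    (fun _ hus _ _ hlim => capCost_le_liminf hT hμ hL hLr hf hh hg hhw hgw hus hlim)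
  exact ⟨fun t ω => U (ω, t), hU, fun v hv => isMinOn_iff.1 hmin (fun p => v p.2 p.1) hv⟩

end Minimizer

theorem stmt9_general (d k : ℕ) (T : ℝ) (hT : 0 < T)
    (f : ℝ → Rvec k) (h g : Rvec d → Rvec k → ℝ) (Dh Dg : Rvec d → Rvec k → Rvec k)
    {Ω : Type*} [MeasurableSpace Ω] (μ : Measure Ω)
    (hprob : IsProbabilityMeasure μ) (hcomp : μ.IsComplete)
    (L : Ω → ℝ → Rvec d)
    (hL_meas : ∀ s : ℝ, Measurable (fun ω => L ω s))
    (hL_cadlag : ∀ ω, CadlagOn T (L ω))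
    (hf_cont : ContinuousOn f (Icc 0 T))
    (hf_pos : ∃ c : ℝ, 0 < c ∧ ∀ t ∈ Icc (0:ℝ) T, ∀ i, c ≤ f t i)
    (hh_meas : Measurable (Function.uncurry h))
    (hg_meas : Measurable (Function.uncurry g))
    (hh_nonneg : ∀ l, ∀ a ∈ orthant k, 0 ≤ h l a)
    (hg_nonneg : ∀ l, ∀ a ∈ orthant k, 0 ≤ g l a)
    (hh_convex : ∀ l, ConvexOn ℝ (orthant k) (h l))
    (hg_convex : ∀ l, ConvexOn ℝ (orthant k) (g l))
    (hh_diff : ∀ l, ∀ a ∈ orthant k,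
      HasFDerivWithinAt (h l) ((innerSL ℝ) (Dh l a)) (orthant k) a)
    (hg_diff : ∀ l, ∀ a ∈ orthant k,
      HasFDerivWithinAt (g l) ((innerSL ℝ) (Dg l a)) (orthant k) a)
    (n : ℕ) :
    ∃ u ∈ Ucap μ k T L n, ∀ v ∈ Ucap μ k T L n,
      capCost μ T L f h g u ≤ capCost μ T L f h g v := by
  obtain ⟨c, hc, hfc⟩ := hf_pos
  exact exists_isMinOn_capCost hT.le hcomp hL_meas (fun ω => (hL_cadlag ω).1) hf_cont
    (fun t ht i => hc.le.trans (hfc t ht i)) hh_meas hg_meas hh_nonneg hg_nonneg hh_convex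
    hg_convex (fun l a ha => (hh_diff l a ha).continuousWithinAt)
    (fun l a ha => (hg_diff l a ha).continuousWithinAt)

/-- **Existence of minimizers for the capped problems** (Proposition 3.2): under
hypothesis (3), for each `n` the infimum of `J` over the Lipschitz class `𝒰^{[n]}`
is attained. -/
theorem stmt9 (d k : ℕ) (T : ℝ) (hT : 0 < T)
    (f : ℝ → Rvec k) (h g : Rvec d → Rvec k → ℝ) (Dh Dg : Rvec d → Rvec k → Rvec k)
    {Ω : Type*} [MeasurableSpace Ω] (μ : Measure Ω)
    (hprob : IsProbabilityMeasure μ) (hcomp : μ.IsComplete)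
    (L : Ω → ℝ → Rvec d)
    (hL_meas : ∀ s : ℝ, Measurable (fun ω => L ω s))
    (hL_cadlag : ∀ ω, CadlagOn T (L ω))
    (hf_cont : ContinuousOn f (Icc 0 T))
    (hf_pos : ∃ c : ℝ, 0 < c ∧ ∀ t ∈ Icc (0:ℝ) T, ∀ i, c ≤ f t i)
    (hh_meas : Measurable (Function.uncurry h))
    (hg_meas : Measurable (Function.uncurry g))
    (hh_nonneg : ∀ l, ∀ a ∈ orthant k, 0 ≤ h l a)
    (hg_nonneg : ∀ l, ∀ a ∈ orthant k, 0 ≤ g l a)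
    (hh_convex : ∀ l, ConvexOn ℝ (orthant k) (h l))
    (hg_convex : ∀ l, ConvexOn ℝ (orthant k) (g l))
    (hh_cont_l : ∀ a ∈ orthant k, Continuous fun l => h l a)
    (hg_cont_l : ∀ a ∈ orthant k, Continuous fun l => g l a)
    (hh_diff : ∀ l, ∀ a ∈ orthant k,
      HasFDerivWithinAt (h l) ((innerSL ℝ) (Dh l a)) (orthant k) a)
    (hg_diff : ∀ l, ∀ a ∈ orthant k,
      HasFDerivWithinAt (g l) ((innerSL ℝ) (Dg l a)) (orthant k) a)
    (hh_dcont : ∀ l, ContinuousOn (Dh l) (orthant k))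
    (hg_dcont : ∀ l, ContinuousOn (Dg l) (orthant k))
    (p q : ℝ) (hp : 1 < p) (hq : 1 < q) (Φh Φg : Rvec d → ℝ)
    (hΦh_meas : Measurable Φh) (hΦg_meas : Measurable Φg)
    (hΦh_nonneg : ∀ l, 0 ≤ Φh l) (hΦg_nonneg : ∀ l, 0 ≤ Φg l)
    (hΦh_Lp : MemLp (fun z : ℝ × Ω => Φh (L z.2 z.1)) (ENNReal.ofReal p)
      ((volume.restrict (Icc (0:ℝ) T)).prod μ))
    (hΦg_Lp : MemLp (fun ω => Φg (L ω T)) (ENNReal.ofReal p) μ)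
    (hh_growth : ∀ l, ∀ a ∈ orthant k, h l 0 + ‖Dh l a‖ ≤ Φh l + ‖a‖ ^ q)
    (hg_growth : ∀ l, ∀ a ∈ orthant k, g l 0 + ‖Dg l a‖ ≤ Φg l + ‖a‖ ^ q)
    (n : ℕ) :
    ∃ u ∈ Ucap μ k T L n, ∀ v ∈ Ucap μ k T L n,
      capCost μ T L f h g u ≤ capCost μ T L f h g v :=
  stmt9_general d k T hT f h g Dh Dg μ hprob hcomp L hL_meas hL_cadlag hf_cont hf_pos hh_meas
    hg_meas hh_nonneg hg_nonneg hh_convex hg_convex hh_diff hg_diff n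
end
end

section
/- An L^p estimate: Let p ≥ 1 and let X, Y be nonnegative random variables on a probability space with X ∈ L¹ and Y ∈ L^p. Suppose that E[(X − r)⁺] ≤ E[Y · 1_{{X > r}}] for all r ≥ 0. Then X ∈ L^p and ‖X‖_p ≤ p ‖Y‖_p. -/
/-!
For `p > 1` and `x ≥ 0` one has `x ^ p = ∫₀^∞ p (p-1) r^(p-2) (x - r)⁺ dr` and
`p x^(p-1) = ∫₀^x p (p-1) r^(p-2) dr`. Integrating the hypothesis against the weight
`p (p-1) r^(p-2)` and exchanging the integrals (Tonelli) gives `E[X^p] ≤ p E[|Y| X^(p-1)]`, and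
Hölder bounds the right side by `p ‖Y‖_p ‖X‖_p^(p-1)`. Dividing by `‖X‖_p^(p-1)` needs
`‖X‖_p < ∞`, so the argument is run for the bounded `min X n`, which satisfies the same
hypothesis, and Fatou's lemma lets `n → ∞`. For `p = 1` the hypothesis at `r = 0` is the claim.
-/

open MeasureTheory Set Filter

open scoped ENNReal

theorem integral_mul_rpow_sub_two_mul_sub {p x : ℝ} (hp : 1 < p) (hx : 0 ≤ x) :
    ∫ r in (0 : ℝ)..x, p * (p - 1) * r ^ (p - 2) * (x - r) = x ^ p := by
  have hpow : ∀ r : ℝ, 0 ≤ r → r ^ (p - 1) = r ^ (p - 2) * r := fun r hr => by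
    rw [← Real.rpow_add_one' hr (by linarith)]; ring_nf
  have hcongr : EqOn (fun r => p * (p - 1) * r ^ (p - 2) * (x - r))
      (fun r => p * (p - 1) * x * r ^ (p - 2) - p * (p - 1) * r ^ (p - 1)) (uIcc 0 x) := by
    intro r hr
    rw [uIcc_of_le hx] at hr
    simp only [hpow r hr.1]
    ring
  have hint : ∀ s : ℝ, -1 < s → IntervalIntegrable (fun r : ℝ => r ^ s) volume 0 x :=
    fun s hs => intervalIntegral.intervalIntegrable_rpow' hs
  rw [intervalIntegral.integral_congr hcongr, intervalIntegral.integral_sub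
    ((hint _ (by linarith)).const_mul _) ((hint _ (by linarith)).const_mul _),
    intervalIntegral.integral_const_mul, intervalIntegral.integral_const_mul,
    integral_rpow (Or.inl (by linarith)), integral_rpow (Or.inl (by linarith)),
    Real.zero_rpow (by linarith), Real.zero_rpow (by linarith),
    show p - 2 + 1 = p - 1 by ring, show p - 1 + 1 = p by ring]
  have hxp : x ^ p = x ^ (p - 1) * x := by
    rw [← Real.rpow_add_one' hx (by linarith), sub_add_cancel]
  have : p - 1 ≠ 0 := by linarith
  rw [hxp]
  field_simp
  ring

theorem integral_mul_rpow_sub_two {p : ℝ} (hp : 1 < p) (x : ℝ) :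
    ∫ r in (0 : ℝ)..x, p * (p - 1) * r ^ (p - 2) = p * x ^ (p - 1) := by
  rw [intervalIntegral.integral_const_mul, integral_rpow (Or.inl (by linarith)),
    Real.zero_rpow (by linarith), show p - 2 + 1 = p - 1 by ring]
  have : p - 1 ≠ 0 := by linarith
  field_simp
  ring

theorem lintegral_Ioc_ofReal_eq_intervalIntegral {f : ℝ → ℝ} {a b : ℝ} (hab : a ≤ b)
    (hf : IntervalIntegrable f volume a b) (hf0 : ∀ r ∈ Ioc a b, 0 ≤ f r) :
    ∫⁻ r in Ioc a b, ENNReal.ofReal (f r) = ENNReal.ofReal (∫ r in a..b, f r) := by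
  rw [intervalIntegral.integral_of_le hab,
    ofReal_integral_eq_lintegral_ofReal hf.1 ((ae_restrict_iff' measurableSet_Ioc).2
      (Eventually.of_forall hf0))]

theorem lintegral_Ioi_mul_rpow_sub_two_mul_posPart {p x : ℝ} (hp : 1 < p) (hx : 0 ≤ x) :
    ∫⁻ r in Ioi 0, ENNReal.ofReal (p * (p - 1) * r ^ (p - 2)) * ENNReal.ofReal (max (x - r) 0)
      = ENNReal.ofReal (x ^ p) := by
  have hw : ∀ r : ℝ, 0 ≤ r → 0 ≤ p * (p - 1) * r ^ (p - 2) := fun r hr =>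
    mul_nonneg (by nlinarith) (Real.rpow_nonneg hr _)
  rw [← Ioc_union_Ioi_eq_Ioi hx, lintegral_union measurableSet_Ioi (Ioc_disjoint_Ioi le_rfl),
    setLIntegral_congr_fun measurableSet_Ioi (g := fun _ => 0) fun r (hr : x < r) => by
      simp [max_eq_right (by linarith : x - r ≤ 0)],
    lintegral_zero, add_zero, ← integral_mul_rpow_sub_two_mul_sub hp hx,
    ← lintegral_Ioc_ofReal_eq_intervalIntegral hx ?_
      fun r hr => mul_nonneg (hw r hr.1.le) (by linarith [hr.2])]
  · refine setLIntegral_congr_fun measurableSet_Ioc fun r hr => ?_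
    rw [max_eq_left (by linarith [hr.2]), ENNReal.ofReal_mul (hw r hr.1.le)]
  · exact ((intervalIntegral.intervalIntegrable_rpow' (by linarith)).const_mul _).mul_continuousOn
      (by fun_prop)

theorem lintegral_Ioo_mul_rpow_sub_two {p x : ℝ} (hp : 1 < p) (hx : 0 ≤ x) :
    ∫⁻ r in Ioo 0 x, ENNReal.ofReal (p * (p - 1) * r ^ (p - 2))
      = ENNReal.ofReal (p * x ^ (p - 1)) := by
  rw [Measure.restrict_congr_set Ioo_ae_eq_Ioc, ← integral_mul_rpow_sub_two hp x,
    lintegral_Ioc_ofReal_eq_intervalIntegral hx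
      ((intervalIntegral.intervalIntegrable_rpow' (by linarith)).const_mul _)
      fun r hr => mul_nonneg (by nlinarith) (Real.rpow_nonneg hr.1.le _)]

theorem ENNReal.le_of_rpow_le_mul_rpow_sub_one {N c : ℝ≥0∞} {p : ℝ} (hN : N ≠ ⊤)
    (h : N ^ p ≤ c * N ^ (p - 1)) : N ≤ c := by
  rcases eq_or_ne N 0 with rfl | hN0
  · exact zero_le
  have hNp : N ^ p = N * N ^ (p - 1) := by
    conv_lhs => rw [← add_sub_cancel 1 p, ENNReal.rpow_add _ _ hN0 hN, ENNReal.rpow_one]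
  rw [hNp] at h
  exact (ENNReal.mul_le_mul_iff_left (ENNReal.rpow_pos (pos_iff_ne_zero.2 hN0) hN).ne'
    (ENNReal.rpow_ne_top_of_ne_zero hN0 hN)).1 h

section

variable {Ω : Type*} [MeasurableSpace Ω] {μ : Measure Ω}

theorem lintegral_ofReal_rpow_le_of_lintegral_posPart_le [SFinite μ] {p : ℝ} (hp : 1 < p)
    {Z : Ω → ℝ} {f : Ω → ℝ≥0∞} (hZ : Measurable Z) (hf : Measurable f) (hZ0 : ∀ ω, 0 ≤ Z ω)
    (h : ∀ r, 0 < r → ∫⁻ ω, ENNReal.ofReal (max (Z ω - r) 0) ∂μ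
      ≤ ∫⁻ ω, {ω | r < Z ω}.indicator f ω ∂μ) :
    ∫⁻ ω, ENNReal.ofReal (Z ω ^ p) ∂μ
      ≤ ENNReal.ofReal p * ∫⁻ ω, f ω * ENNReal.ofReal (Z ω ^ (p - 1)) ∂μ := by
  set w : ℝ → ℝ≥0∞ := fun r => ENNReal.ofReal (p * (p - 1) * r ^ (p - 2))
  have hw : Measurable w := by fun_prop
  have hmeas_posPart : Measurable fun q : Ω × ℝ => w q.2 * ENNReal.ofReal (max (Z q.1 - q.2) 0) := by
    fun_prop
  have hmeas_ind : Measurable fun q : Ω × ℝ => w q.2 * {ω | q.2 < Z ω}.indicator f q.1 :=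
    (hw.comp measurable_snd).mul ((hf.comp measurable_fst).indicator
      (measurableSet_lt measurable_snd (hZ.comp measurable_fst)) :)
  have hslice : ∀ ω, ∫⁻ r in Ioi 0, w r * {ω | r < Z ω}.indicator f ω
      = f ω * ENNReal.ofReal (p * Z ω ^ (p - 1)) := by
    intro ω
    have hind_eq : ∀ r, w r * {ω | r < Z ω}.indicator f ω = (Iio (Z ω)).indicator w r * f ω := by
      intro r
      by_cases hr : r < Z ω <;> simp [hr]
    simp_rw [hind_eq]
    rw [lintegral_mul_const _ (hw.indicator measurableSet_Iio),
      lintegral_indicator measurableSet_Iio, Measure.restrict_restrict measurableSet_Iio,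
      Iio_inter_Ioi, lintegral_Ioo_mul_rpow_sub_two hp (hZ0 ω), mul_comm]
  calc ∫⁻ ω, ENNReal.ofReal (Z ω ^ p) ∂μ
      = ∫⁻ ω, (∫⁻ r in Ioi 0, w r * ENNReal.ofReal (max (Z ω - r) 0)) ∂μ := by
        simp_rw [w, lintegral_Ioi_mul_rpow_sub_two_mul_posPart hp (hZ0 _)]
    _ = ∫⁻ r in Ioi 0, w r * ∫⁻ ω, ENNReal.ofReal (max (Z ω - r) 0) ∂μ := by
        rw [lintegral_lintegral_swap hmeas_posPart.aemeasurable]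
        exact lintegral_congr fun r => lintegral_const_mul _ (by fun_prop)
    _ ≤ ∫⁻ r in Ioi 0, w r * ∫⁻ ω, {ω | r < Z ω}.indicator f ω ∂μ :=
        setLIntegral_mono' measurableSet_Ioi fun r hr => mul_le_mul_right (h r hr) _
    _ = ∫⁻ ω, f ω * ENNReal.ofReal (p * Z ω ^ (p - 1)) ∂μ := by
        simp_rw [← hslice]
        rw [lintegral_lintegral_swap hmeas_ind.aemeasurable]
        refine lintegral_congr fun r => (lintegral_const_mul _ ?_).symm
        exact hf.indicator (measurableSet_lt measurable_const hZ)
    _ = ENNReal.ofReal p * ∫⁻ ω, f ω * ENNReal.ofReal (Z ω ^ (p - 1)) ∂μ := by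
        rw [← lintegral_const_mul _ (by fun_prop)]
        refine lintegral_congr fun ω => ?_
        rw [ENNReal.ofReal_mul (by linarith)]
        ring

theorem eLpNorm_ofReal_rpow_eq_lintegral {p : ℝ} (hp : 0 < p) {Z : Ω → ℝ}
    (hZ0 : ∀ ω, 0 ≤ Z ω) :
    eLpNorm Z (ENNReal.ofReal p) μ ^ p = ∫⁻ ω, ENNReal.ofReal (Z ω ^ p) ∂μ := by
  rw [eLpNorm_eq_lintegral_rpow_enorm_toReal (by simpa using hp) ENNReal.ofReal_ne_top,
    ENNReal.toReal_ofReal hp.le, ← ENNReal.rpow_mul, one_div_mul_cancel hp.ne', ENNReal.rpow_one]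
  refine lintegral_congr fun ω => ?_
  rw [Real.enorm_eq_ofReal (hZ0 ω), ENNReal.ofReal_rpow_of_nonneg (hZ0 ω) hp.le]

theorem eLpNorm_le_of_lintegral_posPart_le {E : Type*} [SFinite μ] [NormedAddCommGroup E]
    [MeasurableSpace E] [OpensMeasurableSpace E]
    {p : ℝ} (hp : 1 < p) {Z : Ω → ℝ} {Y : Ω → E} (hZ : Measurable Z) (hY : Measurable Y)
    (hZ0 : ∀ ω, 0 ≤ Z ω) (hZp : eLpNorm Z (ENNReal.ofReal p) μ ≠ ⊤)
    (h : ∀ r, 0 < r → ∫⁻ ω, ENNReal.ofReal (max (Z ω - r) 0) ∂μ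
      ≤ ∫⁻ ω, {ω | r < Z ω}.indicator (fun ω => ‖Y ω‖ₑ) ω ∂μ) :
    eLpNorm Z (ENNReal.ofReal p) μ ≤ ENNReal.ofReal p * eLpNorm Y (ENNReal.ofReal p) μ := by
  have hp0 : 0 < p := by linarith
  have hpq : p.HolderConjugate p.conjExponent := Real.HolderConjugate.conjExponent hp
  set N := eLpNorm Z (ENNReal.ofReal p) μ
  have hpow : ∀ ω, ENNReal.ofReal (Z ω ^ (p - 1)) ^ p.conjExponent
      = ENNReal.ofReal (Z ω ^ p) := fun ω => by
    rw [ENNReal.ofReal_rpow_of_nonneg (Real.rpow_nonneg (hZ0 ω) _) hpq.symm.nonneg,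
      ← Real.rpow_mul (hZ0 ω), hpq.sub_one_mul_conj]
  have hexp : p * (1 / p.conjExponent) = p - 1 := by
    field_simp [hpq.symm.ne_zero]
    linear_combination -hpq.sub_one_mul_conj
  have holder : ∫⁻ ω, ‖Y ω‖ₑ * ENNReal.ofReal (Z ω ^ (p - 1)) ∂μ
      ≤ eLpNorm Y (ENNReal.ofReal p) μ * N ^ (p - 1) := by
    calc ∫⁻ ω, ‖Y ω‖ₑ * ENNReal.ofReal (Z ω ^ (p - 1)) ∂μ
        ≤ (∫⁻ ω, ‖Y ω‖ₑ ^ p ∂μ) ^ (1 / p) * (∫⁻ ω, ENNReal.ofReal (Z ω ^ (p - 1))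
            ^ p.conjExponent ∂μ) ^ (1 / p.conjExponent) :=
        ENNReal.lintegral_mul_le_Lp_mul_Lq μ hpq hY.enorm.aemeasurable (by fun_prop)
      _ = eLpNorm Y (ENNReal.ofReal p) μ * N ^ (p - 1) := by
        rw [eLpNorm_eq_lintegral_rpow_enorm_toReal (by simpa using hp0) ENNReal.ofReal_ne_top,
          ENNReal.toReal_ofReal hp0.le]
        simp_rw [hpow, ← eLpNorm_ofReal_rpow_eq_lintegral hp0 hZ0, ← ENNReal.rpow_mul, hexp, N]
  refine ENNReal.le_of_rpow_le_mul_rpow_sub_one (p := p) hZp ?_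
  calc N ^ p = ∫⁻ ω, ENNReal.ofReal (Z ω ^ p) ∂μ :=
        eLpNorm_ofReal_rpow_eq_lintegral hp0 hZ0
    _ ≤ ENNReal.ofReal p * ∫⁻ ω, ‖Y ω‖ₑ * ENNReal.ofReal (Z ω ^ (p - 1)) ∂μ :=
      lintegral_ofReal_rpow_le_of_lintegral_posPart_le hp hZ hY.enorm hZ0 h
    _ ≤ ENNReal.ofReal p * (eLpNorm Y (ENNReal.ofReal p) μ * N ^ (p - 1)) := by gcongr
    _ = ENNReal.ofReal p * eLpNorm Y (ENNReal.ofReal p) μ * N ^ (p - 1) := (mul_assoc _ _ _).symm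

theorem lintegral_posPart_min_le {Z : Ω → ℝ} {f : Ω → ℝ≥0∞} {r : ℝ} (c : ℝ)
    (h : ∫⁻ ω, ENNReal.ofReal (max (Z ω - r) 0) ∂μ
      ≤ ∫⁻ ω, {ω | r < Z ω}.indicator f ω ∂μ) :
    ∫⁻ ω, ENNReal.ofReal (max (min (Z ω) c - r) 0) ∂μ
      ≤ ∫⁻ ω, {ω | r < min (Z ω) c}.indicator f ω ∂μ := by
  rcases le_or_gt c r with hcr | hrc
  · have hzero : ∀ ω, ENNReal.ofReal (max (min (Z ω) c - r) 0) = 0 := fun ω => by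
      simp [(min_le_right _ _).trans hcr]
    simp only [hzero, lintegral_zero, zero_le]
  · have hset : {ω | r < min (Z ω) c} = {ω | r < Z ω} := by
      ext ω
      simp [hrc]
    rw [hset]
    refine le_trans (lintegral_mono fun ω => ?_) h
    gcongr
    exact min_le_left _ _

theorem eLpNorm_one_le_of_lintegral_posPart_le {E : Type*} [NormedAddCommGroup E]
    {X : Ω → ℝ} {Y : Ω → E} (hX0 : ∀ ω, 0 ≤ X ω)
    (h : ∫⁻ ω, ENNReal.ofReal (max (X ω - 0) 0) ∂μ
      ≤ ∫⁻ ω, {ω | 0 < X ω}.indicator (fun ω => ‖Y ω‖ₑ) ω ∂μ) :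
    eLpNorm X 1 μ ≤ eLpNorm Y 1 μ := by
  rw [eLpNorm_one_eq_lintegral_enorm, eLpNorm_one_eq_lintegral_enorm]
  calc ∫⁻ ω, ‖X ω‖ₑ ∂μ = ∫⁻ ω, ENNReal.ofReal (max (X ω - 0) 0) ∂μ := by
        simp_rw [sub_zero, max_eq_left (hX0 _), Real.enorm_eq_ofReal (hX0 _)]
    _ ≤ _ := h
    _ ≤ ∫⁻ ω, ‖Y ω‖ₑ ∂μ := lintegral_mono (indicator_le_self _ _)

theorem lintegral_posPart_le_of_integral_posPart_le {X Y : Ω → ℝ} {r : ℝ}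
    (hX : Integrable X μ) (hr : 0 ≤ r)
    (h : ∫ ω, max (X ω - r) 0 ∂μ ≤ ∫ ω, {ω | r < X ω}.indicator Y ω ∂μ) :
    ∫⁻ ω, ENNReal.ofReal (max (X ω - r) 0) ∂μ
      ≤ ∫⁻ ω, {ω | r < X ω}.indicator (fun ω => ‖Y ω‖ₑ) ω ∂μ := by
  have hint : Integrable (fun ω => max (X ω - r) 0) μ := by
    refine hX.norm.mono' (by fun_prop) (ae_of_all _ fun ω => ?_)
    rw [Real.norm_of_nonneg (le_max_right _ _), Real.norm_eq_abs]
    exact max_le (by linarith [le_abs_self (X ω)]) (abs_nonneg _)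
  calc ∫⁻ ω, ENNReal.ofReal (max (X ω - r) 0) ∂μ
      = ENNReal.ofReal (∫ ω, max (X ω - r) 0 ∂μ) :=
        (ofReal_integral_eq_lintegral_ofReal hint (ae_of_all _ fun _ => le_max_right _ _)).symm
    _ ≤ ‖∫ ω, {ω | r < X ω}.indicator Y ω ∂μ‖ₑ :=
        (ENNReal.ofReal_le_ofReal h).trans (Real.ofReal_le_enorm _)
    _ ≤ ∫⁻ ω, ‖{ω | r < X ω}.indicator Y ω‖ₑ ∂μ :=
        enorm_integral_le_lintegral_enorm _
    _ = _ := by simp_rw [enorm_indicator_eq_indicator_enorm]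

theorem eLpNorm_le_of_forall_eLpNorm_min_natCast_le {p : ℝ≥0∞} {X : Ω → ℝ} {C : ℝ≥0∞}
    (hX : Measurable X)
    (h : ∀ n : ℕ, eLpNorm (fun ω => min (X ω) n) p μ ≤ C) : eLpNorm X p μ ≤ C := by
  have hlim : ∀ ω, Tendsto (fun n : ℕ => min (X ω) n) atTop (nhds (X ω)) := fun ω =>
    tendsto_const_nhds.congr' <| (eventually_ge_atTop ⌈X ω⌉₊).mono fun n hn =>
      (min_eq_left ((Nat.le_ceil _).trans (Nat.cast_le.2 hn))).symm
  exact (Lp.eLpNorm_lim_le_liminf_eLpNorm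
    (fun n => (hX.min measurable_const).aestronglyMeasurable) X (ae_of_all _ hlim)).trans
    (liminf_le_of_frequently_le' (Frequently.of_forall h))

end

theorem stmt15_general {Ω : Type*} [MeasurableSpace Ω] (μ : Measure Ω)
    (hμ : IsProbabilityMeasure μ) (p : ℝ) (hp : 1 ≤ p)
    (X Y : Ω → ℝ) (hXmeas : Measurable X) (hYmeas : Measurable Y)
    (hX0 : ∀ ω, 0 ≤ X ω)
    (hX1 : Integrable X μ)
    (hYp : MemLp Y (ENNReal.ofReal p) μ)
    (hineq : ∀ r : ℝ, 0 ≤ r →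
      (∫ ω, max (X ω - r) 0 ∂μ) ≤ ∫ ω, ({ω' | r < X ω'}).indicator Y ω ∂μ) :
    MemLp X (ENNReal.ofReal p) μ ∧
      eLpNorm X (ENNReal.ofReal p) μ ≤ ENNReal.ofReal p * eLpNorm Y (ENNReal.ofReal p) μ := by
  have hpos (r : ℝ) (hr : 0 ≤ r) :=
    lintegral_posPart_le_of_integral_posPart_le hX1 hr (hineq r hr)
  have hbound : eLpNorm X (ENNReal.ofReal p) μ
      ≤ ENNReal.ofReal p * eLpNorm Y (ENNReal.ofReal p) μ := by
    rcases hp.eq_or_lt with rfl | hp1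
    · simpa using eLpNorm_one_le_of_lintegral_posPart_le hX0 (hpos 0 le_rfl)
    refine eLpNorm_le_of_forall_eLpNorm_min_natCast_le hXmeas fun n => ?_
    have hXn : Measurable fun ω => min (X ω) n := hXmeas.min measurable_const
    have hXn_bdd : ∀ ω, ‖min (X ω) n‖ ≤ n := fun ω => by
      rw [Real.norm_of_nonneg (le_min (hX0 ω) n.cast_nonneg)]
      exact min_le_right _ _
    exact eLpNorm_le_of_lintegral_posPart_le hp1 hXn hYmeas
      (fun ω => le_min (hX0 ω) n.cast_nonneg)
      (MemLp.of_bound hXn.aestronglyMeasurable n (ae_of_all _ hXn_bdd)).eLpNorm_ne_top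
      fun r hr => lintegral_posPart_min_le _ (hpos r hr.le)
  exact ⟨⟨hXmeas.aestronglyMeasurable,
    hbound.trans_lt (ENNReal.mul_lt_top ENNReal.ofReal_lt_top hYp.eLpNorm_lt_top)⟩, hbound⟩

/-- **An `L^p` estimate** (Lemma A.3): if nonnegative random variables `X ∈ L¹` and
`Y ∈ L^p` satisfy `E[(X-r)⁺] ≤ E[Y 1_{X>r}]` for all `r ≥ 0`, then `X ∈ L^p` and
`‖X‖_p ≤ p ‖Y‖_p`. -/
theorem stmt15 {Ω : Type*} [MeasurableSpace Ω] (μ : Measure Ω)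
    (hμ : IsProbabilityMeasure μ) (p : ℝ) (hp : 1 ≤ p)
    (X Y : Ω → ℝ) (hXmeas : Measurable X) (hYmeas : Measurable Y)
    (hX0 : ∀ ω, 0 ≤ X ω) (hY0 : ∀ ω, 0 ≤ Y ω)
    (hX1 : Integrable X μ)
    (hYp : MemLp Y (ENNReal.ofReal p) μ)
    (hineq : ∀ r : ℝ, 0 ≤ r →
      (∫ ω, max (X ω - r) 0 ∂μ) ≤ ∫ ω, ({ω' | r < X ω'}).indicator Y ω ∂μ) :
    MemLp X (ENNReal.ofReal p) μ ∧
      eLpNorm X (ENNReal.ofReal p) μ ≤ ENNReal.ofReal p * eLpNorm Y (ENNReal.ofReal p) μ :=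
  stmt15_general μ hμ p hp X Y hXmeas hYmeas hX0 hX1 hYp hineq
end

section
/- A Gronwall-type gradient bound for convex functions: Let φ : [0,∞)^k → [0,∞) be convex and continuously differentiable, and suppose there exist constants Φ ≥ 0 and M ≥ 0 such that |∇φ(a)| ≤ Φ + M φ(a) for all a ∈ [0,∞)^k. Then, for all a ∈ [0,∞)^k and x ∈ ℝ^k with a + x ∈ [0,∞)^k, |∇φ(a + x)| ≤ (Φ + M φ(a)) e^{M |x|}. -/
/-!
Along the segment `t ↦ a + t • x` the function `u t = Φ + M φ(a + t x)` has derivative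
`M ⟨∇φ(a + t x), x⟩ ≤ M |x| |∇φ(a + t x)| ≤ M |x| u t`, so Grönwall's inequality gives
`u 1 ≤ u 0 · e^{M |x|}`, while `|∇φ(a + x)| ≤ u 1` by the hypothesis once more.
-/

open MeasureTheory Set Filter

noncomputable section

open Real

theorem le_mul_exp_of_hasDerivWithinAt_le_mul {u u' : ℝ → ℝ} {K a b : ℝ} (hab : a ≤ b)
    (hu : ContinuousOn u (Icc a b))
    (hu' : ∀ t ∈ Ico a b, HasDerivWithinAt u (u' t) (Icc a b) t)
    (bound : ∀ t ∈ Ico a b, u' t ≤ K * u t) :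
    u b ≤ u a * exp (K * (b - a)) := by
  have h := le_gronwallBound_of_liminf_deriv_right_le hu
    (fun t ht _ hr =>
      ((hu' t ht).mono_of_mem_nhdsWithin (Icc_mem_nhdsGE_of_mem ht)).liminf_right_slope_le hr)
    le_rfl (fun t ht => (bound t ht).trans (le_add_of_nonneg_right le_rfl)) b ⟨hab, le_rfl⟩
  rwa [gronwallBound_ε0] at h

theorem norm_le_mul_exp_of_norm_fderiv_le {E : Type*} [NormedAddCommGroup E] [NormedSpace ℝ E]
    {s : Set E} (hs : Convex ℝ s) {φ : E → ℝ} {φ' : E → E →L[ℝ] ℝ} {Φ M : ℝ} (hM : 0 ≤ M)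
    (hφ : ∀ a ∈ s, HasFDerivWithinAt φ (φ' a) s a)
    (hbound : ∀ a ∈ s, ‖φ' a‖ ≤ Φ + M * φ a) {a x : E} (ha : a ∈ s) (hax : a + x ∈ s) :
    ‖φ' (a + x)‖ ≤ (Φ + M * φ a) * exp (M * ‖x‖) := by
  set γ : ℝ → E := fun t => a + t • x
  have hγs : MapsTo γ (Icc 0 1) s := fun t ht => hs.add_smul_mem ha hax ht
  have hγ' (t : ℝ) : HasDerivAt γ x t :=
    (((hasDerivAt_id t).smul_const x).const_add a).congr_deriv (one_smul ℝ x)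
  have hu' : ∀ t ∈ Icc (0 : ℝ) 1, HasDerivWithinAt (fun t => Φ + M * φ (γ t))
      (M * φ' (γ t) x) (Icc 0 1) t := fun t ht =>
    (((hφ _ (hγs ht)).comp_hasDerivWithinAt t (hγ' t).hasDerivWithinAt hγs).const_mul M).const_add Φ
  have hslope : ∀ t ∈ Ico (0 : ℝ) 1, M * φ' (γ t) x ≤ M * ‖x‖ * (Φ + M * φ (γ t)) := by
    intro t ht
    have hγt := hγs (Ico_subset_Icc_self ht)
    calc M * φ' (γ t) x ≤ M * (‖φ' (γ t)‖ * ‖x‖) :=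
          mul_le_mul_of_nonneg_left ((le_abs_self _).trans ((φ' (γ t)).le_opNorm x)) hM
      _ ≤ M * ((Φ + M * φ (γ t)) * ‖x‖) := by gcongr; exact hbound _ hγt
      _ = M * ‖x‖ * (Φ + M * φ (γ t)) := by ring
  have hgronwall := le_mul_exp_of_hasDerivWithinAt_le_mul zero_le_one
    (fun t ht => (hu' t ht).continuousWithinAt) (fun t ht => hu' t (Ico_subset_Icc_self ht)) hslope
  calc ‖φ' (a + x)‖ ≤ Φ + M * φ (a + x) := hbound _ hax
    _ ≤ (Φ + M * φ a) * exp (M * ‖x‖) := by simpa [γ] using hgronwall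

theorem convex_orthant (k : ℕ) : Convex ℝ (orthant k) :=
  fun _ ha _ hb _ _ hs ht _ i => by
    simpa using add_nonneg (mul_nonneg hs (ha i)) (mul_nonneg ht (hb i))

theorem stmt16_general (k : ℕ) (φ : Rvec k → ℝ) (Dφ : Rvec k → Rvec k)
    (Φ M : ℝ) (hM : 0 ≤ M)
    (hφ_diff : ∀ a ∈ orthant k,
      HasFDerivWithinAt φ ((innerSL ℝ) (Dφ a)) (orthant k) a)
    (hbound : ∀ a ∈ orthant k, ‖Dφ a‖ ≤ Φ + M * φ a) :
    ∀ a ∈ orthant k, ∀ x : Rvec k, a + x ∈ orthant k →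
      ‖Dφ (a + x)‖ ≤ (Φ + M * φ a) * Real.exp (M * ‖x‖) := by
  intro a ha x hax
  simpa only [innerSL_apply_norm] using
    norm_le_mul_exp_of_norm_fderiv_le (convex_orthant k) hM hφ_diff
      (by simpa only [innerSL_apply_norm] using hbound) ha hax

/-- **A Gronwall-type gradient bound for convex functions** (inequality (3.2)): if a
nonnegative convex `C¹` function `φ` on `[0,∞)^k` satisfies `|∇φ| ≤ Φ + M φ`, then
`|∇φ(a+x)| ≤ (Φ + M φ(a)) e^{M |x|}` whenever `a, a+x ∈ [0,∞)^k`. -/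
theorem stmt16 (k : ℕ) (φ : Rvec k → ℝ) (Dφ : Rvec k → Rvec k)
    (Φ M : ℝ) (hΦ : 0 ≤ Φ) (hM : 0 ≤ M)
    (hφ_nonneg : ∀ a ∈ orthant k, 0 ≤ φ a)
    (hφ_convex : ConvexOn ℝ (orthant k) φ)
    (hφ_diff : ∀ a ∈ orthant k,
      HasFDerivWithinAt φ ((innerSL ℝ) (Dφ a)) (orthant k) a)
    (hφ_dcont : ContinuousOn Dφ (orthant k))
    (hbound : ∀ a ∈ orthant k, ‖Dφ a‖ ≤ Φ + M * φ a) :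
    ∀ a ∈ orthant k, ∀ x : Rvec k, a + x ∈ orthant k →
      ‖Dφ (a + x)‖ ≤ (Φ + M * φ a) * Real.exp (M * ‖x‖) :=
  stmt16_general k φ Dφ Φ M hM hφ_diff hbound
end
end
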